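/- arXiv:2306.08597 — 3 statements merged into one kernel-verified Lean document; each statement's English description precedes it below -/
import Mathlib

section
/- Fix n ≥ 1. The 2^n − 1 rank functions r_{SM_n(I)}, as I ranges over the nonempty subsets of [n], form a basis of the ℝ-vector space of all functions f : 2^{[n]} → ℝ satisfying f(∅) = 0. -/
open MvPolynomial

noncomputable section

/-- The defining recursion for the family of Grothendieck polynomials of permutations of `Fin n`
(written with 0-based positions): `G w₀ = x₀^{n-1} x₁^{n-2} ⋯`, and whenever `w j < w (j+1)`,
`(x_j - x_{j+1}) * G w = f - s_j · f` where `f = (1 - x_{j+1}) * G (w s_j)`. -/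
def IsGrothendieck (n : ℕ) (G : Equiv.Perm (Fin n) → MvPolynomial (Fin n) ℤ) : Prop :=
  G Fin.revPerm = ∏ i : Fin n, X i ^ (n - 1 - (i : ℕ)) ∧
    ∀ (w : Equiv.Perm (Fin n)) (j j' : Fin n), (j : ℕ) + 1 = (j' : ℕ) → w j < w j' →
      (X j - X j') * G w =
        (1 - X j') * G (w * Equiv.swap j j') -
          rename (⇑(Equiv.swap j j')) ((1 - X j') * G (w * Equiv.swap j j'))

/-- `w` is vexillary: it avoids the pattern 2143. -/
def Vexillary {n : ℕ} (w : Equiv.Perm (Fin n)) : Prop :=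
  ¬∃ i j k l : Fin n, i < j ∧ j < k ∧ k < l ∧ w j < w i ∧ w i < w l ∧ w l < w k

/-- The Rothe diagram of `w`, as a set of (row, column) pairs with 1-based indexing:
`D(w) = {(i,j) : i < w⁻¹(j), j < w(i)}`. -/
def RotheDiagram (n : ℕ) (w : Equiv.Perm (Fin n)) : Finset (ℕ × ℕ) :=
  Finset.image (fun p : Fin n × Fin n => ((p.1 : ℕ) + 1, (p.2 : ℕ) + 1))
    (Finset.univ.filter fun p : Fin n × Fin n => p.1 < w.symm p.2 ∧ p.2 < w p.1)

/-- The rank function of the Rothe diagram: `r(i,j) = #{k < i : w(k) < j}` (1-based). -/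
def RotheRank (n : ℕ) (w : Equiv.Perm (Fin n)) (s : ℕ × ℕ) : ℤ :=
  ((Finset.univ.filter fun k : Fin n => (k : ℕ) + 1 < s.1 ∧ (w k : ℕ) + 1 < s.2).card : ℤ)

/-- Two squares are linked with respect to the Rothe rank function:
`i - i' = r(i,j) - r(i',j')`. -/
def RLinked (n : ℕ) (w : Equiv.Perm (Fin n)) (s t : ℕ × ℕ) : Prop :=
  (s.1 : ℤ) - (t.1 : ℤ) = RotheRank n w s - RotheRank n w t

/-- A bubbling diagram: a diagram `D` of squares (row ≥ 1, 1-based), a nonnegative rank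
function `r` and a set `F ⊆ D` of dead squares, such that every dead square has a live square
strictly above it in its column with the prescribed rank difference to the closest such, and
dead squares in the same row have distinct ranks. -/
structure BubblingDiagram where
  D : Finset (ℕ × ℕ)
  r : ℕ × ℕ → ℤ
  F : Finset (ℕ × ℕ)
  F_subset : F ⊆ D
  r_nonneg : ∀ s ∈ D, 0 ≤ r s
  dead_live_above : ∀ s ∈ F, ∃ i' < s.1, (i', s.2) ∈ D ∧ (i', s.2) ∉ F
  dead_rank : ∀ s ∈ F, ∀ i' < s.1, (i', s.2) ∈ D → (i', s.2) ∉ F →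
    (∀ i'', i' < i'' → i'' < s.1 → (i'', s.2) ∈ D → (i'', s.2) ∈ F) →
    r s - r (i', s.2) = (s.1 : ℤ) - (i' : ℤ)
  dead_distinct : ∀ s ∈ F, ∀ t ∈ F, s.1 = t.1 → s.2 ≠ t.2 → r s ≠ r t

/-- A bubbling move: a live square `(i,j)` with `(i-1,j)` empty moves up one row,
its rank decreasing by one. -/
def IsBubbleMove (B C : BubblingDiagram) : Prop :=
  ∃ i j : ℕ, 2 ≤ i ∧ (i, j) ∈ B.D ∧ (i, j) ∉ B.F ∧ (i - 1, j) ∉ B.D ∧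
    C.D = insert (i - 1, j) (B.D.erase (i, j)) ∧ C.F = B.F ∧
    C.r = Function.update B.r (i - 1, j) (B.r (i, j) - 1)

/-- A K-bubbling move: a live square `(i,j)` with `(i-1,j)` empty, and such that no dead square
in row `i` has the same rank as `(i,j)`, moves up one row (rank decreasing by one), leaving
behind a dead copy of itself. -/
def IsKBubbleMove (B C : BubblingDiagram) : Prop :=
  ∃ i j : ℕ, 2 ≤ i ∧ (i, j) ∈ B.D ∧ (i, j) ∉ B.F ∧ (i - 1, j) ∉ B.D ∧
    (∀ k : ℕ, (i, k) ∈ B.F → B.r (i, k) ≠ B.r (i, j)) ∧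
    C.D = insert (i - 1, j) B.D ∧ C.F = insert (i, j) B.F ∧
    C.r = Function.update B.r (i - 1, j) (B.r (i, j) - 1)

/-- `C ∈ BD(B)`: `C` is obtainable from `B` by finitely many bubbling and K-bubbling moves. -/
def InBD (B C : BubblingDiagram) : Prop :=
  Relation.ReflTransGen (fun P Q => IsBubbleMove P Q ∨ IsKBubbleMove P Q) B C

/-- The Rothe bubbling diagram `𝒟(w) = (D(w), r_{D(w)}, ∅)`. -/
def RotheBD (n : ℕ) (w : Equiv.Perm (Fin n)) : BubblingDiagram where
  D := RotheDiagram n w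
  r := RotheRank n w
  F := ∅
  F_subset := Finset.empty_subset _
  r_nonneg := fun _ _ => Int.natCast_nonneg _
  dead_live_above := by simp
  dead_rank := by simp
  dead_distinct := by simp

/-- The weight of a diagram: its `i`-th coordinate is the number of squares in row `i+1`
(1-based row `i+1` corresponds to `i : Fin n`). -/
def diagWt (n : ℕ) (D : Finset (ℕ × ℕ)) (i : Fin n) : ℕ :=
  (D.filter fun s => s.1 = (i : ℕ) + 1).card

/-- Gale order on finite sets of naturals: same cardinality, and the `m`-th smallest element
of `R` is at most the `m`-th smallest element of `S`, for every `m`. -/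
def galeLE (R S : Finset ℕ) : Prop :=
  R.card = S.card ∧ ∀ m < R.card, (R.sort (· ≤ ·)).getD m 0 ≤ (S.sort (· ≤ ·)).getD m 0

/-- Column `j` of a diagram: the set of rows of its squares in column `j`. -/
def diagCol (D : Finset (ℕ × ℕ)) (j : ℕ) : Finset ℕ :=
  (D.filter fun s => s.2 = j).image Prod.fst

/-- Columnwise Gale order on diagrams. -/
def diagLE (C D : Finset (ℕ × ℕ)) : Prop := ∀ j : ℕ, galeLE (diagCol C j) (diagCol D j)

/-- The diagram lies in the grid `[n] × [n]` (1-based). -/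
def InGrid (n : ℕ) (D : Finset (ℕ × ℕ)) : Prop :=
  ∀ s ∈ D, s.1 ∈ Finset.Icc 1 n ∧ s.2 ∈ Finset.Icc 1 n

/-- M-convexity of a set of lattice points. -/
def MConvex {m : ℕ} (S : Set (Fin m → ℤ)) : Prop :=
  ∀ x ∈ S, ∀ y ∈ S, ∀ i : Fin m, y i < x i →
    ∃ j : Fin m, x j < y j ∧ (x - Pi.single i 1 + Pi.single j 1) ∈ S ∧
      (y - Pi.single j 1 + Pi.single i 1) ∈ S

open Classical in
/-- The rank function of the Schubert matroid `SM_n(I)`: the bases are the `B ⊆ [n]` with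
`B ≤ I` in Gale order, and `rank J = max {#(J ∩ B) : B a basis}`. -/
def schubertRank (n : ℕ) (I J : Finset ℕ) : ℕ :=
  ((Finset.Icc 1 n).powerset.filter fun B => galeLE B I).sup fun B => (J ∩ B).card

/-- The Schubert matroid polytope `P(SM_n(I)) ⊆ ℝⁿ`: the convex hull of the 0/1 indicator
vectors of the bases of `SM_n(I)` (coordinate `i : Fin n` stands for the element `i+1`). -/
def schubertPolytope (n : ℕ) (I : Finset ℕ) : Set (Fin n → ℝ) :=
  convexHull ℝ {v | ∃ B : Finset ℕ, B ⊆ Finset.Icc 1 n ∧ galeLE B I ∧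
    v = fun i : Fin n => if (i : ℕ) + 1 ∈ B then (1 : ℝ) else 0}

/-- A Schubitope: a finite Minkowski sum of Schubert matroid polytopes of nonempty
subsets of `[n]`. -/
def IsSchubitope (n : ℕ) (P : Set (Fin n → ℝ)) : Prop :=
  ∃ (k : ℕ) (I : Fin k → Finset ℕ), (∀ j, (I j).Nonempty ∧ I j ⊆ Finset.Icc 1 n) ∧
    P = {x | ∃ p : Fin k → Fin n → ℝ, (∀ j, p j ∈ schubertPolytope n (I j)) ∧ x = ∑ j, p j}

/-- A generalized permutahedron: the polytope cut out by a submodular function `z`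
with `z(∅) = 0`. -/
def IsGenPermutahedron {m : ℕ} (P : Set (Fin m → ℝ)) : Prop :=
  ∃ z : Finset (Fin m) → ℝ, z ∅ = 0 ∧
    (∀ A B : Finset (Fin m), z (A ∪ B) + z (A ∩ B) ≤ z A + z B) ∧
    P = {t | (∀ A : Finset (Fin m), ∑ i ∈ A, t i ≤ z A) ∧ ∑ i, t i = z Finset.univ}

/-- The padding sets `S^{(k,s)}`: `S^{(0,s)} = S` and `S^{(k,s)}` is obtained from
`S^{(k-1,s)}` by inserting the largest `i ∈ [1, s)` not already present (when one exists). -/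
def pad (S : Finset ℕ) (s : ℕ) : ℕ → Finset ℕ
  | 0 => S
  | k + 1 =>
      if h : ((Finset.Ico 1 s).filter fun i => i ∉ pad S s k).Nonempty then
        insert (((Finset.Ico 1 s).filter fun i => i ∉ pad S s k).max' h) (pad S s k)
      else pad S s k

/-- `d = s - #{i ∈ S : i ≤ s}`. -/
def padDepth (S : Finset ℕ) (s : ℕ) : ℕ := s - (S.filter fun i => i ≤ s).card

/-- The order `I ≺ J`: `max (I \ J) ≤ max (J \ I)` (with the convention `max ∅ = 0`). -/
def maxPrec (I J : Finset ℕ) : Prop := (I \ J).sup id ≤ (J \ I).sup id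

/-- Rows of the live squares of column `j` of a bubbling diagram. -/
def liveCol (B : BubblingDiagram) (j : ℕ) : Finset ℕ :=
  ((B.D \ B.F).filter fun s => s.2 = j).image Prod.fst

/-- The row of the `a`-th highest live square of column `j` (`a` is 1-based; highest means
smallest row index). -/
def nthLiveRow (B : BubblingDiagram) (j a : ℕ) : ℕ :=
  ((liveCol B j).sort (· ≤ ·)).getD (a - 1) 0

/-- The number of squares of `D` strictly below `s` in its column. -/
def belowCount (D : Finset (ℕ × ℕ)) (s : ℕ × ℕ) : ℕ :=
  (D.filter fun t => t.2 = s.2 ∧ s.1 < t.1).card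

/-- The total order `≺` on the squares of a diagram: lower rows first; within a row, fewer
squares below first; ties broken by smaller column index. -/
def sqPrec (D : Finset (ℕ × ℕ)) (s t : ℕ × ℕ) : Prop :=
  t.1 < s.1 ∨ (s.1 = t.1 ∧ belowCount D s < belowCount D t) ∨
    (s.1 = t.1 ∧ belowCount D s = belowCount D t ∧ s.2 < t.2)

end

/-!
As `r_I ∅ = 0` and `r_∅ = 0`, the claim is that the square system indexed by the nonempty
`I, J ⊆ [n]` is invertible, i.e. that the `r_I` are linearly independent; this goes by induction
on `n`. For `J ⊆ [n]`, adding `n + 1` to `J` leaves `r_I J` unchanged when `n + 1 ∉ I`, and for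
`I = I' ∪ {n + 1}` raises it by one exactly when `J` is independent in `SM_n(I')`. That happens
only for `J = I'` or for `J` below `I'` in the lexicographic order on (cardinality, sum of
elements), since `B < I'` in Gale order forces `∑ B < ∑ I'`. This incidence matrix is thus
unitriangular, so the coefficients of all `I ∋ n + 1` vanish; the others vanish by induction,
because `r_I` does not depend on `n` once `I ⊆ [n]`.
-/

open Finset

lemma sort_getD_eq_orderEmbOfFin {α : Type*} [LinearOrder α] (s : Finset α) (a : α) {m : ℕ}
    (hm : m < #s) : (s.sort (· ≤ ·)).getD m a = s.orderEmbOfFin rfl ⟨m, hm⟩ := by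
  rw [List.getD_eq_getElem _ _ (by simpa using hm), orderEmbOfFin_apply]
  rfl

lemma sort_getD_le_iff {α : Type*} [LinearOrder α] (s : Finset α) (a : α) {m : ℕ} (hm : m < #s)
    (t : α) : (s.sort (· ≤ ·)).getD m a ≤ t ↔ m + 1 ≤ #{x ∈ s | x ≤ t} := by
  set e := s.orderEmbOfFin rfl
  have hcard : #{x ∈ s | x ≤ t} = #{i | e i ≤ t} := by
    conv_lhs => rw [← s.image_orderEmbOfFin_univ rfl, filter_image]
    exact card_image_of_injective _ e.injective
  rw [sort_getD_eq_orderEmbOfFin s a hm, hcard]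
  constructor
  · intro h
    calc m + 1 = #(Iic (⟨m, hm⟩ : Fin #s)) := (Fin.card_Iic (⟨m, hm⟩ : Fin #s)).symm
      _ ≤ _ := card_le_card fun i hi => mem_filter.2
          ⟨mem_univ _, (e.monotone (mem_Iic.1 hi)).trans h⟩
  · intro h
    by_contra! hlt
    have : #{i | e i ≤ t} ≤ #(Iio (⟨m, hm⟩ : Fin #s)) := card_le_card fun i hi => by
      simp only [mem_filter, mem_univ, true_and] at hi
      exact mem_Iio.2 (e.lt_iff_lt.1 (hi.trans_lt hlt))
    rw [Fin.card_Iio] at this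
    simp only at this
    omega

theorem galeLE_iff_card_filter_le {R S : Finset ℕ} :
    galeLE R S ↔ #R = #S ∧ ∀ t, #{x ∈ S | x ≤ t} ≤ #{x ∈ R | x ≤ t} := by
  refine and_congr_right fun hcard => ⟨fun hle t => ?_, fun hcnt m hm => ?_⟩
  · obtain h0 | hpos := Nat.eq_zero_or_pos #{x ∈ S | x ≤ t}
    · omega
    have hk : #{x ∈ S | x ≤ t} - 1 < #S := by have := card_filter_le S (· ≤ t); omega
    have hS := (sort_getD_le_iff S 0 hk t).2 (by omega)
    have hR := (sort_getD_le_iff R 0 (hcard ▸ hk) t).1 ((hle _ (hcard ▸ hk)).trans hS)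
    omega
  · exact (sort_getD_le_iff R 0 hm _).2 <|
      ((sort_getD_le_iff S 0 (hcard ▸ hm) _).1 le_rfl).trans (hcnt _)

lemma galeLE_refl (I : Finset ℕ) : galeLE I I := ⟨rfl, fun _ _ => le_rfl⟩

lemma galeLE.forall_le {B I : Finset ℕ} (h : galeLE B I) {t : ℕ} (hI : ∀ s ∈ I, s ≤ t) :
    ∀ b ∈ B, b ≤ t := by
  obtain ⟨hcard, hcnt⟩ := galeLE_iff_card_filter_le.1 h
  have hB : {x ∈ B | x ≤ t} = B := eq_of_subset_of_card_le (filter_subset _ _) <| by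
    rw [hcard, ← filter_true_of_mem hI]
    exact hcnt t
  intro b hb
  rw [← hB] at hb
  exact (mem_filter.1 hb).2

lemma card_filter_le_insert {α : Type*} [LinearOrder α] {s : Finset α} {x : α} (hx : x ∉ s)
    (t : α) :
    #{y ∈ insert x s | y ≤ t} = #{y ∈ s | y ≤ t} + if x ≤ t then 1 else 0 := by
  rw [filter_insert]
  split_ifs
  · exact card_insert_of_notMem fun h => hx (mem_filter.1 h).1
  · rfl

lemma galeLE_insert_insert {B I : Finset ℕ} {x u : ℕ} (h : galeLE B I) (hx : x ∉ B)
    (hu : u ∉ I) (hxu : x ≤ u) : galeLE (insert x B) (insert u I) := by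
  obtain ⟨hcard, hcnt⟩ := galeLE_iff_card_filter_le.1 h
  refine galeLE_iff_card_filter_le.2 ⟨?_, fun t => ?_⟩
  · rw [card_insert_of_notMem hx, card_insert_of_notMem hu, hcard]
  · rw [card_filter_le_insert hx, card_filter_le_insert hu]
    have := hcnt t
    split_ifs <;> omega

lemma galeLE_of_insert_insert {B I : Finset ℕ} {u : ℕ} (hB : u ∉ B) (hI : u ∉ I)
    (h : galeLE (insert u B) (insert u I)) : galeLE B I := by
  obtain ⟨hcard, hcnt⟩ := galeLE_iff_card_filter_le.1 h
  refine galeLE_iff_card_filter_le.2 ⟨?_, fun t => ?_⟩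
  · rwa [card_insert_of_notMem hB, card_insert_of_notMem hI, Nat.add_right_cancel_iff] at hcard
  · have := hcnt t
    rw [card_filter_le_insert hB, card_filter_le_insert hI] at this
    omega

lemma sum_eq_sum_orderEmbOfFin {α M : Type*} [LinearOrder α] [AddCommMonoid M] (s : Finset α)
    {k : ℕ} (h : #s = k) (g : α → M) : ∑ x ∈ s, g x = ∑ i, g (s.orderEmbOfFin h i) := by
  conv_lhs => rw [← s.map_orderEmbOfFin_univ h, sum_map]
  rfl

lemma galeLE.sum_lt {J I : Finset ℕ} (h : galeLE J I) (hne : J ≠ I) :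
    ∑ x ∈ J, x < ∑ x ∈ I, x := by
  obtain ⟨hcard, hle⟩ := h
  set eJ := J.orderEmbOfFin rfl
  set eI := I.orderEmbOfFin hcard.symm
  have hmono : ∀ i, eJ i ≤ eI i := fun i => by
    have := hle i i.2
    rwa [sort_getD_eq_orderEmbOfFin J 0 i.2, sort_getD_eq_orderEmbOfFin I 0 (hcard ▸ i.2)] at this
  have hdiff : ∃ i, eJ i < eI i := by
    by_contra! heq
    have hrange := congrArg Set.range (funext fun i => le_antisymm (hmono i) (heq i))
    rw [J.range_orderEmbOfFin rfl, I.range_orderEmbOfFin hcard.symm] at hrange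
    exact hne (coe_inj.1 hrange)
  obtain ⟨i, hi⟩ := hdiff
  rw [sum_eq_sum_orderEmbOfFin J rfl fun x => x, sum_eq_sum_orderEmbOfFin I hcard.symm fun x => x]
  exact sum_lt_sum (fun i _ => hmono i) ⟨i, mem_univ _, hi⟩

lemma Icc_one_succ_eq_insert (n : ℕ) : Icc 1 (n + 1) = insert (n + 1) (Icc 1 n) :=
  (insert_Icc_right_eq_Icc_add_one (by omega)).symm

lemma succ_notMem_of_subset_Icc {n : ℕ} {S : Finset ℕ} (hS : S ⊆ Icc 1 n) : n + 1 ∉ S :=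
  fun h => by simpa using (mem_Icc.1 (hS h)).2

lemma forall_le_of_mem_powerset_Icc {n : ℕ} {I : Finset ℕ} (hI : I ∈ (Icc 1 n).powerset) :
    ∀ s ∈ I, s ≤ n :=
  fun _ hs => (mem_Icc.1 (mem_powerset.1 hI hs)).2

lemma sum_powerset_Icc_one_succ {M : Type*} [AddCommMonoid M] (n : ℕ) (g : Finset ℕ → M) :
    ∑ I ∈ (Icc 1 (n + 1)).powerset, g I =
      ∑ I ∈ (Icc 1 n).powerset, g I + ∑ I ∈ (Icc 1 n).powerset, g (insert (n + 1) I) := by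
  rw [Icc_one_succ_eq_insert, sum_powerset_insert (by simp)]

lemma eq_zero_of_sum_mul_eq_zero_of_triangular {α β R : Type*} [LinearOrder β] [Semiring R]
    [NoZeroDivisors R] {s : Finset α} (μ : α → β) (A : α → α → R)
    (hdiag : ∀ I ∈ s, A I I ≠ 0) (htri : ∀ I ∈ s, ∀ J ∈ s, J ≠ I → A I J ≠ 0 → μ J < μ I)
    {d : α → R} (h : ∀ J ∈ s, ∑ I ∈ s, d I * A I J = 0) : ∀ I ∈ s, d I = 0 := by
  classical
  by_contra! hex
  obtain ⟨I, hI, hdI⟩ := hex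
  obtain ⟨I₀, hI₀, hmax⟩ := exists_max_image {I ∈ s | d I ≠ 0} μ ⟨I, mem_filter.2 ⟨hI, hdI⟩⟩
  rw [mem_filter] at hI₀
  have hrow := h I₀ hI₀.1
  rw [sum_eq_single_of_mem I₀ hI₀.1 fun I hI hne => ?_] at hrow
  · exact mul_ne_zero hI₀.2 (hdiag I₀ hI₀.1) hrow
  by_cases hd : d I = 0
  · rw [hd, zero_mul]
  by_cases hA : A I I₀ = 0
  · rw [hA, mul_zero]
  exact absurd (hmax I (mem_filter.2 ⟨hI, hd⟩)) (htri I hI I₀ hI₀.1 hne.symm hA).not_ge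

lemma existsUnique_coeffs_of_forall_eq_zero {α K : Type*} [Field K] (s : Finset α)
    (A : α → α → K) (hA : ∀ d : α → K, (∀ J ∈ s, ∑ I ∈ s, d I * A I J = 0) → ∀ I ∈ s, d I = 0)
    (f : α → K) : ∃! c : α → K, (∀ I ∉ s, c I = 0) ∧ ∀ J ∈ s, f J = ∑ I ∈ s, c I * A I J := by
  classical
  let M : Matrix s s K := fun I J => A I J
  let extend (v : s → K) (I : α) : K := if h : I ∈ s then v ⟨I, h⟩ else 0
  have hsum (v : s → K) (J : s) : ∑ I ∈ s, extend v I * A I J = M.vecMul v J := by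
    rw [← sum_coe_sort]
    simp [extend, M, Matrix.vecMul, dotProduct]
  have hinj : Function.Injective M.vecMul := by
    refine (injective_iff_map_eq_zero M.vecMulLinear).2 fun v hv => funext fun I => ?_
    have := hA (extend v) (fun J hJ => by rw [hsum v ⟨J, hJ⟩]; exact congrFun hv _) I I.2
    simpa [extend] using this
  obtain ⟨v, hv⟩ := Matrix.vecMul_surjective_iff_isUnit.2
    (Matrix.vecMul_injective_iff_isUnit.1 hinj) fun J => f J
  refine ⟨extend v, ⟨fun I hI => dif_neg hI, fun J hJ => ?_⟩, ?_⟩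
  · rw [hsum v ⟨J, hJ⟩]
    exact (congrFun hv ⟨J, hJ⟩).symm
  rintro c ⟨hc0, hc⟩
  have hdiff := hA (fun I => c I - extend v I) fun J hJ => by
    simp only [sub_mul, sum_sub_distrib, ← hc J hJ, hsum v ⟨J, hJ⟩, hv, sub_self]
  funext I
  by_cases hI : I ∈ s
  · exact sub_eq_zero.1 (hdiff I hI)
  · rw [hc0 I hI]
    simp [extend, hI]

lemma card_inter_le_schubertRank {n : ℕ} {I B : Finset ℕ} (J : Finset ℕ) (hB : B ⊆ Icc 1 n)
    (hBI : galeLE B I) : #(J ∩ B) ≤ schubertRank n I J := by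
  classical
  exact le_sup (f := fun B => #(J ∩ B)) (mem_filter.2 ⟨mem_powerset.2 hB, hBI⟩)

lemma schubertRank_le_card (n : ℕ) (I J : Finset ℕ) : schubertRank n I J ≤ #J :=
  Finset.sup_le fun _ _ => card_le_card inter_subset_left

lemma schubertRank_empty_left (n : ℕ) (J : Finset ℕ) : schubertRank n ∅ J = 0 := by
  classical
  refine Nat.eq_zero_of_le_zero (Finset.sup_le fun B hB => ?_)
  rw [card_eq_zero.1 ((mem_filter.1 hB).2.1.trans card_empty), inter_empty, card_empty]

lemma schubertRank_empty_right (n : ℕ) (I : Finset ℕ) : schubertRank n I ∅ = 0 :=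
  Nat.eq_zero_of_le_zero (schubertRank_le_card n I ∅)

lemma schubertRank_mono (n : ℕ) (I : Finset ℕ) {J J' : Finset ℕ} (h : J ⊆ J') :
    schubertRank n I J ≤ schubertRank n I J' :=
  Finset.sup_mono_fun fun _ _ => card_le_card (inter_subset_inter_right h)

lemma schubertRank_succ {n : ℕ} {I : Finset ℕ} (hI : ∀ s ∈ I, s ≤ n) (J : Finset ℕ) :
    schubertRank (n + 1) I J = schubertRank n I J := by
  classical
  unfold schubertRank
  congr 1
  ext B
  simp only [mem_filter, mem_powerset, and_congr_left_iff]
  intro hBI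
  have hB := hBI.forall_le hI
  exact ⟨fun h b hb => mem_Icc.2 ⟨(mem_Icc.1 (h hb)).1, hB b hb⟩,
    fun h => h.trans (Icc_subset_Icc_right n.le_succ)⟩

lemma schubertRank_insert_of_lt {N t u : ℕ} {I : Finset ℕ} (hI : ∀ s ∈ I, s ≤ t) (htu : t < u)
    (J : Finset ℕ) : schubertRank N I (insert u J) = schubertRank N I J := by
  classical
  refine Finset.sup_congr rfl fun B hB => ?_
  have huB : u ∉ B := fun hu => htu.not_ge ((mem_filter.1 hB).2.forall_le hI u hu)
  rw [insert_inter_of_notMem huB]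

def SchubertIndep (n : ℕ) (I J : Finset ℕ) : Prop :=
  ∃ B ⊆ Icc 1 n, galeLE B I ∧ J ⊆ B

lemma SchubertIndep.toLex_lt {n : ℕ} {I J : Finset ℕ} (h : SchubertIndep n I J) (hne : J ≠ I) :
    toLex (#J, ∑ x ∈ J, x) < toLex (#I, ∑ x ∈ I, x) := by
  obtain ⟨B, -, hBI, hJB⟩ := h
  rw [Prod.Lex.toLex_lt_toLex]
  obtain rfl | hJB := hJB.eq_or_ssubset
  · exact .inr ⟨hBI.1, hBI.sum_lt hne⟩
  · exact .inl (hBI.1 ▸ card_lt_card hJB)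

lemma schubertRank_insert_succ_of_indep {n : ℕ} {I J : Finset ℕ} (hI : I ⊆ Icc 1 n)
    (h : SchubertIndep n I J) :
    schubertRank (n + 1) (insert (n + 1) I) (insert (n + 1) J) =
      schubertRank (n + 1) (insert (n + 1) I) J + 1 := by
  obtain ⟨B, hB, hBI, hJB⟩ := h
  have hC : insert (n + 1) B ⊆ Icc 1 (n + 1) :=
    insert_subset (by simp) (hB.trans (Icc_subset_Icc_right n.le_succ))
  have hCI : galeLE (insert (n + 1) B) (insert (n + 1) I) :=
    galeLE_insert_insert hBI (succ_notMem_of_subset_Icc hB) (succ_notMem_of_subset_Icc hI) le_rfl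
  have hJ : schubertRank (n + 1) (insert (n + 1) I) J = #J := by
    refine (schubertRank_le_card _ _ _).antisymm ?_
    have := card_inter_le_schubertRank J hC hCI
    rwa [inter_eq_left.2 (hJB.trans (subset_insert _ _))] at this
  rw [hJ]
  refine ((schubertRank_le_card _ _ _).trans (card_insert_le _ _)).antisymm ?_
  have := card_inter_le_schubertRank (insert (n + 1) J) hC hCI
  rwa [inter_eq_left.2 (insert_subset_insert _ hJB),
    card_insert_of_notMem (succ_notMem_of_subset_Icc (hJB.trans hB))] at this

lemma schubertRank_insert_succ_of_not_indep {n : ℕ} {I J : Finset ℕ} (hI : I ⊆ Icc 1 n)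
    (hJ : J ⊆ Icc 1 n) (h : ¬SchubertIndep n I J) :
    schubertRank (n + 1) (insert (n + 1) I) (insert (n + 1) J) =
      schubertRank (n + 1) (insert (n + 1) I) J := by
  classical
  refine le_antisymm (Finset.sup_le fun B hB => ?_) (schubertRank_mono _ _ (subset_insert _ _))
  obtain ⟨hB, hBI⟩ : B ⊆ Icc 1 (n + 1) ∧ galeLE B (insert (n + 1) I) := by
    simpa only [mem_filter, mem_powerset] using hB
  have hnJ := succ_notMem_of_subset_Icc hJ
  by_cases hnB : n + 1 ∈ B
  swap
  · rw [insert_inter_of_notMem hnB]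
    exact card_inter_le_schubertRank J hB hBI
  -- An element of `J` missing from `B \ {n + 1}` can take the place of `n + 1` in `B`.
  obtain ⟨B', hnB', rfl⟩ : ∃ B', n + 1 ∉ B' ∧ B = insert (n + 1) B' :=
    ⟨B.erase (n + 1), notMem_erase _ _, (insert_erase hnB).symm⟩
  have hB' : B' ⊆ Icc 1 n := by
    rw [Icc_one_succ_eq_insert, insert_subset_insert_iff hnB'] at hB
    exact hB
  have hB'I : galeLE B' I := galeLE_of_insert_insert hnB' (succ_notMem_of_subset_Icc hI) hBI
  obtain ⟨x, hxJ, hxB'⟩ := not_subset.1 fun hJB' => h ⟨B', hB', hB'I, hJB'⟩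
  have hIcc : Icc 1 n ⊆ Icc 1 (n + 1) := Icc_subset_Icc_right n.le_succ
  have key := card_inter_le_schubertRank J (insert_subset (hIcc (hJ hxJ)) (hB'.trans hIcc))
    (galeLE_insert_insert hB'I hxB' (succ_notMem_of_subset_Icc hI) (mem_Icc.1 (hIcc (hJ hxJ))).2)
  rwa [inter_insert_of_mem hxJ, card_insert_of_notMem fun h => hxB' (mem_inter.1 h).2,
    ← card_insert_of_notMem fun h => hnJ (mem_inter.1 h).1, insert_inter_distrib] at key

open Classical in
lemma schubertRank_insert_succ {n : ℕ} {I J : Finset ℕ} (hI : I ⊆ Icc 1 n) (hJ : J ⊆ Icc 1 n) :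
    schubertRank (n + 1) (insert (n + 1) I) (insert (n + 1) J) =
      schubertRank (n + 1) (insert (n + 1) I) J + if SchubertIndep n I J then 1 else 0 := by
  split_ifs with h
  · exact schubertRank_insert_succ_of_indep hI h
  · exact schubertRank_insert_succ_of_not_indep hI hJ h

open Classical in
lemma eq_zero_insert_succ_of_sum_mul_schubertRank_eq_zero {n : ℕ} {d : Finset ℕ → ℝ}
    (h : ∀ J ⊆ Icc 1 (n + 1),
      ∑ I ∈ (Icc 1 (n + 1)).powerset, d I * schubertRank (n + 1) I J = 0) :
    ∀ I ∈ (Icc 1 n).powerset, d (insert (n + 1) I) = 0 := by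
  simp only [sum_powerset_Icc_one_succ] at h
  refine eq_zero_of_sum_mul_eq_zero_of_triangular (fun I => toLex (#I, ∑ x ∈ I, x))
    (fun I J => if SchubertIndep n I J then (1 : ℝ) else 0)
    (fun I hI => ?_) (fun I _ J _ hne hIJ => ?_) fun J hJ => ?_
  · rw [if_pos ⟨I, mem_powerset.1 hI, galeLE_refl I, subset_rfl⟩]
    exact one_ne_zero
  · exact SchubertIndep.toLex_lt (by_contra fun hn => hIJ (if_neg hn)) hne
  rw [mem_powerset] at hJ
  have hJ' : insert (n + 1) J ⊆ Icc 1 (n + 1) := by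
    rw [Icc_one_succ_eq_insert]
    exact insert_subset_insert _ hJ
  have hbot : ∑ I ∈ (Icc 1 n).powerset, d I * schubertRank (n + 1) I (insert (n + 1) J) =
      ∑ I ∈ (Icc 1 n).powerset, d I * schubertRank (n + 1) I J :=
    sum_congr rfl fun I hI => by
      rw [schubertRank_insert_of_lt (forall_le_of_mem_powerset_Icc hI) n.lt_succ_self]
  have htop : ∑ I ∈ (Icc 1 n).powerset,
        d (insert (n + 1) I) * schubertRank (n + 1) (insert (n + 1) I) (insert (n + 1) J) =
      ∑ I ∈ (Icc 1 n).powerset, d (insert (n + 1) I) * schubertRank (n + 1) (insert (n + 1) I) J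
        + ∑ I ∈ (Icc 1 n).powerset,
          d (insert (n + 1) I) * if SchubertIndep n I J then (1 : ℝ) else 0 := by
    rw [← sum_add_distrib]
    refine sum_congr rfl fun I hI => ?_
    rw [schubertRank_insert_succ (mem_powerset.1 hI) hJ]
    push_cast
    ring
  linear_combination h _ hJ' - h J (hJ.trans (Icc_subset_Icc_right n.le_succ)) - hbot - htop

theorem eq_zero_of_sum_mul_schubertRank_eq_zero (n : ℕ) (d : Finset ℕ → ℝ)
    (h : ∀ J ⊆ Icc 1 n, ∑ I ∈ (Icc 1 n).powerset, d I * schubertRank n I J = 0) :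
    ∀ I ⊆ Icc 1 n, I.Nonempty → d I = 0 := by
  induction n generalizing d with
  | zero => simp
  | succ n ih =>
    have htop := eq_zero_insert_succ_of_sum_mul_schubertRank_eq_zero h
    have hbot : ∀ I ⊆ Icc 1 n, I.Nonempty → d I = 0 := ih d fun J hJ => by
      have hzero : ∑ I ∈ (Icc 1 n).powerset,
          d (insert (n + 1) I) * schubertRank (n + 1) (insert (n + 1) I) J = 0 :=
        sum_eq_zero fun I hI => by rw [htop I hI, zero_mul]
      have hsplit := h J (hJ.trans (Icc_subset_Icc_right n.le_succ))
      rw [sum_powerset_Icc_one_succ, hzero, add_zero] at hsplit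
      refine Eq.trans (sum_congr rfl fun I hI => ?_) hsplit
      rw [schubertRank_succ (forall_le_of_mem_powerset_Icc hI)]
    intro I hI hne
    rw [Icc_one_succ_eq_insert, subset_insert_iff] at hI
    by_cases hnI : n + 1 ∈ I
    · rw [← insert_erase hnI]
      exact htop _ (mem_powerset.2 hI)
    · rw [erase_eq_of_notMem hnI] at hI
      exact hbot I hI hne

theorem stmt_3_general (n : ℕ) (f : Finset ℕ → ℝ) (hf : f ∅ = 0) :
    ∃! c : Finset ℕ → ℝ,
      (∀ I : Finset ℕ, I ∉ ((Finset.Icc 1 n).powerset.erase ∅) → c I = 0) ∧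
      ∀ J ⊆ Finset.Icc 1 n,
        f J = ∑ I ∈ (Finset.Icc 1 n).powerset.erase ∅,
          c I * (schubertRank n I J : ℝ) := by
  set s := (Icc 1 n).powerset.erase ∅
  have hempty (c : Finset ℕ → ℝ) : ∑ I ∈ s, c I * (schubertRank n I ∅ : ℝ) = 0 :=
    sum_eq_zero fun I _ => by rw [schubertRank_empty_right, Nat.cast_zero, mul_zero]
  have hmem {J : Finset ℕ} (hJ : J ⊆ Icc 1 n) (hne : J ≠ ∅) : J ∈ s :=
    mem_erase.2 ⟨hne, mem_powerset.2 hJ⟩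
  refine (existsUnique_congr fun c => and_congr_right fun _ => ⟨fun hc J hJ => ?_,
    fun hc J hJ => hc J (mem_powerset.1 (mem_of_mem_erase hJ))⟩).1 <|
    existsUnique_coeffs_of_forall_eq_zero s _ (fun d hd I hI => ?_) f
  · obtain rfl | hne := eq_or_ne J ∅
    · rw [hf, hempty]
    · exact hc J (hmem hJ hne)
  refine eq_zero_of_sum_mul_schubertRank_eq_zero n d (fun J hJ => ?_) I
    (mem_powerset.1 (mem_of_mem_erase hI)) (nonempty_iff_ne_empty.2 (ne_of_mem_erase hI))
  rw [← sum_erase _ (by rw [schubertRank_empty_left, Nat.cast_zero, mul_zero])]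
  obtain rfl | hne := eq_or_ne J ∅
  · exact hempty d
  · exact hd J (hmem hJ hne)

theorem stmt_3 (n : ℕ) (hn : 1 ≤ n) (f : Finset ℕ → ℝ) (hf : f ∅ = 0) :
    ∃! c : Finset ℕ → ℝ,
      (∀ I : Finset ℕ, I ∉ ((Finset.Icc 1 n).powerset.erase ∅) → c I = 0) ∧
      ∀ J ⊆ Finset.Icc 1 n,
        f J = ∑ I ∈ (Finset.Icc 1 n).powerset.erase ∅,
          c I * (schubertRank n I J : ℝ) :=
  stmt_3_general n f hf
end

section
/- Let P ⊆ ℝ^n be a generalized permutahedron defined by a submodular function z with z(∅) = 0. Then P is a Schubitope, i.e., P equals a finite Minkowski sum P(SM_n(I_1)) + … + P(SM_n(I_k)) of Schubert matroid polytopes with each I_j ⊆ [n] nonempty, if and only if z is a ℤ≥0-linear combination of rank functions r_{SM_n(I)} of Schubert matroids (I nonempty). -/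
open MvPolynomial

/-!
A generalized permutahedron `P_z` determines `z`: `z A` is the maximum of `∑ i ∈ A, t i` over
`P_z`, attained at the greedy point of any chain through `A`. Greedy points are additive in `z`,
and the greedy point of a chain maximises over `P_z` every linear functional that decreases along
the chain. The Schubert rank function obeys the min-max formula
`r_I(J) = min_t (#{j ∈ J | j ≤ t} + #{i ∈ I | t < i})`, so it is submodular, and its greedy points
are indicator vectors of bases of `SM_n(I)`. Hence a linear functional separating a point of
`P_z`, `z = ∑ r_{I_j}`, from the Minkowski sum `∑ P(SM_n(I_j))` would be beaten by the sum of the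
greedy points along a chain adapted to it: the two polytopes coincide, and both directions follow.
-/

open Finset

namespace SchubertMatroid

section Gale

def countLE (t : ℕ) (S : Finset ℕ) : ℕ := #{x ∈ S | x ≤ t}

def countGT (t : ℕ) (S : Finset ℕ) : ℕ := #{x ∈ S | t < x}

lemma countLE_add_countGT (t : ℕ) (S : Finset ℕ) : countLE t S + countGT t S = #S := by
  simpa only [countLE, countGT, not_le] using card_filter_add_card_filter_not (s := S) (· ≤ t)

lemma countLE_insert {a : ℕ} {S : Finset ℕ} (ha : a ∉ S) (t : ℕ) :
    countLE t (insert a S) = countLE t S + if a ≤ t then 1 else 0 := by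
  unfold countLE
  split_ifs with hat
  · rw [filter_insert, if_pos hat, card_insert_of_notMem (by simp [ha])]
  · rw [filter_insert, if_neg hat, add_zero]

lemma countGT_insert {a : ℕ} {S : Finset ℕ} (ha : a ∉ S) (t : ℕ) :
    countGT t (insert a S) = countGT t S + if t < a then 1 else 0 := by
  unfold countGT
  split_ifs with hat
  · rw [filter_insert, if_pos hat, card_insert_of_notMem (by simp [ha])]
  · rw [filter_insert, if_neg hat, add_zero]

lemma countLE_eq_card_filter_orderEmbOfFin (S : Finset ℕ) {k : ℕ} (h : #S = k) (t : ℕ) :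
    countLE t S = #{i | S.orderEmbOfFin h i ≤ t} := by
  conv_lhs => rw [countLE, ← S.image_orderEmbOfFin_univ h, filter_image]
  exact card_image_of_injective _ (S.orderEmbOfFin h).injective

lemma forall_le_iff_card_filter_le {α : Type*} [LinearOrder α] {k : ℕ} {f g : Fin k → α}
    (hf : Monotone f) (hg : Monotone g) :
    (∀ i, f i ≤ g i) ↔ ∀ t, #{i | g i ≤ t} ≤ #{i | f i ≤ t} := by
  refine ⟨fun h t => card_le_card fun i => ?_, fun h i => ?_⟩
  · simpa only [mem_filter, mem_univ, true_and] using (h i).trans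
  · rw [← Tuple.lt_card_le_iff_apply_le_of_monotone hf]
    exact lt_of_lt_of_le ((Tuple.lt_card_le_iff_apply_le_of_monotone hg).2 le_rfl) (h (g i))

lemma galeLE_iff_orderEmbOfFin {B I : Finset ℕ} :
    galeLE B I ↔ ∃ h : #B = #I, ∀ i, B.orderEmbOfFin h i ≤ I.orderEmbOfFin rfl i := by
  refine ⟨fun ⟨hcard, hle⟩ => ⟨hcard, fun i => ?_⟩, fun ⟨hcard, hle⟩ => ⟨hcard, fun m hm => ?_⟩⟩
  · have := hle i (by omega)
    rwa [List.getD_eq_getElem, List.getD_eq_getElem] at this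
  · have := hle ⟨m, by omega⟩
    rwa [List.getD_eq_getElem, List.getD_eq_getElem]

lemma galeLE_iff_countLE {B I : Finset ℕ} :
    galeLE B I ↔ #B = #I ∧ ∀ t, countLE t I ≤ countLE t B := by
  rw [galeLE_iff_orderEmbOfFin]
  refine ⟨fun ⟨hcard, hle⟩ => ⟨hcard, ?_⟩, fun ⟨hcard, hle⟩ => ⟨hcard, ?_⟩⟩
  all_goals simp only [countLE_eq_card_filter_orderEmbOfFin I rfl,
    countLE_eq_card_filter_orderEmbOfFin B hcard] at *
  · exact (forall_le_iff_card_filter_le (OrderEmbedding.monotone _)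
      (OrderEmbedding.monotone _)).1 hle
  · exact (forall_le_iff_card_filter_le (OrderEmbedding.monotone _)
      (OrderEmbedding.monotone _)).2 hle

lemma galeLE_refl (I : Finset ℕ) : galeLE I I := ⟨rfl, fun _ _ => le_rfl⟩

lemma galeLE.insert_insert {B I : Finset ℕ} (h : galeLE B I) {x s : ℕ} (hx : x ∉ B)
    (hs : s ∉ I) (hxs : x ≤ s) : galeLE (insert x B) (insert s I) := by
  rw [galeLE_iff_countLE] at h ⊢
  refine ⟨by rw [card_insert_of_notMem hx, card_insert_of_notMem hs, h.1], fun t => ?_⟩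
  rw [countLE_insert hx, countLE_insert hs]
  have := h.2 t
  split_ifs <;> omega

lemma countGT_le_of_galeLE {B I : Finset ℕ} (h : galeLE B I) (t : ℕ) :
    countGT t B ≤ countGT t I := by
  rw [galeLE_iff_countLE] at h
  have := h.2 t
  have := countLE_add_countGT t B
  have := countLE_add_countGT t I
  omega

lemma countLE_eq_zero {t : ℕ} {S : Finset ℕ} (h : ∀ x ∈ S, t < x) : countLE t S = 0 :=
  card_eq_zero.2 (filter_eq_empty_iff.2 fun x hx => not_le.2 (h x hx))

lemma countGT_eq_zero {t : ℕ} {S : Finset ℕ} (h : ∀ x ∈ S, x ≤ t) : countGT t S = 0 :=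
  card_eq_zero.2 (filter_eq_empty_iff.2 fun x hx => not_lt.2 (h x hx))

lemma countLE_union_add_inter_le {t t' : ℕ} (htt' : t ≤ t') (A B : Finset ℕ) :
    countLE t (A ∪ B) + countLE t' (A ∩ B) ≤ countLE t A + countLE t' B := by
  unfold countLE
  have hV : {x ∈ A ∩ B | x ≤ t'} ⊆ {x ∈ B | x ≤ t'} := filter_subset_filter _ inter_subset_right
  have hU : {x ∈ A ∪ B | x ≤ t} ⊆ {x ∈ A | x ≤ t} ∪ ({x ∈ B | x ≤ t'} \ {x ∈ A ∩ B | x ≤ t'}) := by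
    intro x
    simp only [mem_filter, mem_union, mem_sdiff, mem_inter]
    grind
  have := (card_le_card hU).trans (card_union_le _ _)
  have := card_sdiff_add_card_eq_card hV
  omega

end Gale

section Rank

variable {n : ℕ} {I J B : Finset ℕ}

lemma card_inter_le_schubertRank (hB : B ⊆ Icc 1 n) (hBI : galeLE B I) :
    #(J ∩ B) ≤ schubertRank n I J := by
  classical
  exact le_sup (f := fun B => #(J ∩ B)) (mem_filter.2 ⟨mem_powerset.2 hB, hBI⟩)

lemma schubertRank_le {m : ℕ} (h : ∀ B ⊆ Icc 1 n, galeLE B I → #(J ∩ B) ≤ m) :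
    schubertRank n I J ≤ m := by
  classical
  exact Finset.sup_le fun B hB => h B (mem_powerset.1 (mem_filter.1 hB).1) (mem_filter.1 hB).2

lemma exists_card_inter_eq_schubertRank (hI : I ⊆ Icc 1 n) (J : Finset ℕ) :
    ∃ B ⊆ Icc 1 n, galeLE B I ∧ #(J ∩ B) = schubertRank n I J := by
  classical
  obtain ⟨B, hB, hmax⟩ := exists_mem_eq_sup ((Icc 1 n).powerset.filter fun B => galeLE B I)
    ⟨I, mem_filter.2 ⟨mem_powerset.2 hI, galeLE_refl I⟩⟩ fun B => #(J ∩ B)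
  rw [mem_filter, mem_powerset] at hB
  exact ⟨B, hB.1, hB.2, by rw [schubertRank, hmax]⟩

lemma schubertRank_le_countLE_add_countGT (t : ℕ) :
    schubertRank n I J ≤ countLE t J + countGT t I :=
  schubertRank_le fun B _ hBI => calc
    #(J ∩ B) = countLE t (J ∩ B) + countGT t (J ∩ B) := (countLE_add_countGT t _).symm
    _ ≤ countLE t J + countGT t B := add_le_add
      (card_le_card (filter_subset_filter _ inter_subset_left))
      (card_le_card (filter_subset_filter _ inter_subset_right))
    _ ≤ countLE t J + countGT t I := add_le_add_right (countGT_le_of_galeLE hBI t) _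

lemma schubertRank_erase_add_one_le {s j : ℕ} (hI : insert s I ⊆ Icc 1 n) (hs : ∀ x ∈ I, x < s)
    (hj : j ∈ J) (hj1 : 1 ≤ j) (hjs : j ≤ s) :
    schubertRank n I (J.erase j) + 1 ≤ schubertRank n (insert s I) J := by
  obtain ⟨B, hB, hBI, hBJ⟩ :=
    exists_card_inter_eq_schubertRank ((subset_insert s I).trans hI) (J.erase j)
  obtain ⟨x, hx1, hxs, hxB, hjx⟩ : ∃ x, 1 ≤ x ∧ x ≤ s ∧ x ∉ B ∧ j ∈ insert x B := by
    by_cases hjB : j ∈ B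
    · have hIs : insert s I ⊆ Icc 1 s := fun y hy => by
        rcases mem_insert.1 hy with rfl | hy
        · exact mem_Icc.2 ⟨(mem_Icc.1 (hI (mem_insert_self y I))).1, le_rfl⟩
        · exact mem_Icc.2 ⟨(mem_Icc.1 (hI (mem_insert_of_mem hy))).1, (hs y hy).le⟩
      have hBs : ¬ Icc 1 s ⊆ B := fun h => by
        have h1 := card_le_card h
        have h2 := card_le_card hIs
        rw [card_insert_of_notMem fun h => (hs s h).false, ← hBI.1] at h2
        simp only [Nat.card_Icc] at h1 h2
        omega
      obtain ⟨x, hx, hxB⟩ := not_subset.1 hBs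
      exact ⟨x, (mem_Icc.1 hx).1, (mem_Icc.1 hx).2, hxB, mem_insert_of_mem hjB⟩
    · exact ⟨j, hj1, hjs, hjB, mem_insert_self j B⟩
  have hxn : insert x B ⊆ Icc 1 n :=
    insert_subset (mem_Icc.2 ⟨hx1, hxs.trans (mem_Icc.1 (hI (mem_insert_self s I))).2⟩) hB
  calc schubertRank n I (J.erase j) + 1 = #(insert j (J.erase j ∩ B)) := by
        rw [card_insert_of_notMem fun h => notMem_erase j J (mem_inter.1 h).1, hBJ]
    _ ≤ #(J ∩ insert x B) := card_le_card (insert_subset (mem_inter.2 ⟨hj, hjx⟩)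
        (inter_subset_inter (erase_subset j J) (subset_insert x B)))
    _ ≤ schubertRank n (insert s I) J :=
        card_inter_le_schubertRank hxn (galeLE.insert_insert hBI hxB (fun h => (hs s h).false) hxs)

lemma exists_countLE_add_countGT_le_schubertRank (hI : I ⊆ Icc 1 n) (hJ : J ⊆ Icc 1 n) :
    ∃ t, countLE t J + countGT t I ≤ schubertRank n I J := by
  induction I using Finset.induction_on_max generalizing J with
  | empty =>
    refine ⟨0, ?_⟩
    rw [countLE_eq_zero fun x hx => (mem_Icc.1 (hJ hx)).1, countGT_eq_zero (by simp)]
    exact Nat.zero_le _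
  | insert s I hs ih =>
    have hsI : s ∉ I := fun h => (hs s h).false
    have hIs : ∀ x ∈ insert s I, x ≤ s := by
      simpa [forall_mem_insert] using fun x hx => (hs x hx).le
    rcases {x ∈ J | x ≤ s}.eq_empty_or_nonempty with hJs | hJs
    · refine ⟨s, ?_⟩
      rw [countLE, hJs, countGT_eq_zero hIs]
      exact Nat.zero_le _
    obtain ⟨j, hj, hjmax⟩ := exists_max_image {x ∈ J | x ≤ s} id hJs
    obtain ⟨hjJ, hjs⟩ := mem_filter.1 hj
    replace hjmax : ∀ x ∈ J, x ≤ s → x ≤ j := fun x hx hxs => hjmax x (mem_filter.2 ⟨hx, hxs⟩)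
    obtain ⟨t, ht⟩ := ih ((subset_insert s I).trans hI) ((erase_subset j J).trans hJ)
    have hstep := schubertRank_erase_add_one_le hI hs hjJ (mem_Icc.1 (hJ hjJ)).1 hjs
    have hJt : ∀ u, countLE u J = countLE u (J.erase j) + if j ≤ u then 1 else 0 := fun u => by
      rw [← countLE_insert (notMem_erase j J), insert_erase hjJ]
    have hIt := countGT_insert hsI t
    by_cases hcase : j ≤ t ∧ t < s
    -- no element of `J` lies in `(t, s]`, so the threshold `s` is at least as good as `t`
    · refine ⟨s, ?_⟩
      have hts : countLE s J = countLE t J := congrArg card (filter_congr fun x hx =>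
        ⟨fun hxs => (hjmax x hx hxs).trans hcase.1, fun hxt => hxt.trans hcase.2.le⟩)
      rw [countGT_eq_zero hIs, hts, hJt, if_pos hcase.1]
      omega
    · refine ⟨t, ?_⟩
      rw [hJt, hIt]
      split_ifs at * <;> omega

lemma schubertRank_union_add_inter_le (hI : I ⊆ Icc 1 n) {A B : Finset ℕ} (hA : A ⊆ Icc 1 n)
    (hB : B ⊆ Icc 1 n) :
    schubertRank n I (A ∪ B) + schubertRank n I (A ∩ B) ≤
      schubertRank n I A + schubertRank n I B := by
  obtain ⟨tA, htA⟩ := exists_countLE_add_countGT_le_schubertRank hI hA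
  obtain ⟨tB, htB⟩ := exists_countLE_add_countGT_le_schubertRank hI hB
  wlog htAB : tA ≤ tB generalizing A B tA tB
  · rw [union_comm, inter_comm, add_comm (schubertRank n I A)]
    exact this hB hA tB htB tA htA (le_of_not_ge htAB)
  have h1 := schubertRank_le_countLE_add_countGT (n := n) (I := I) (J := A ∪ B) tA
  have h2 := schubertRank_le_countLE_add_countGT (n := n) (I := I) (J := A ∩ B) tB
  have := countLE_union_add_inter_le htAB A B
  omega

lemma schubertRank_mono {J J' : Finset ℕ} (h : J ⊆ J') :
    schubertRank n I J ≤ schubertRank n I J' :=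
  schubertRank_le fun _ hB hBI =>
    (card_le_card (inter_subset_inter_right h)).trans (card_inter_le_schubertRank hB hBI)

lemma schubertRank_insert_le (a : ℕ) (J : Finset ℕ) :
    schubertRank n I (insert a J) ≤ schubertRank n I J + 1 :=
  schubertRank_le fun B hB hBI => calc
    #(insert a J ∩ B) ≤ #(insert a (J ∩ B)) := card_le_card fun x => by
      simp only [mem_inter, mem_insert]; tauto
    _ ≤ #(J ∩ B) + 1 := card_insert_le a _
    _ ≤ schubertRank n I J + 1 := Nat.add_le_add_right (card_inter_le_schubertRank hB hBI) 1

lemma schubertRank_le_card (J : Finset ℕ) : schubertRank n I J ≤ #J :=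
  schubertRank_le fun _ _ _ => card_le_card inter_subset_left

lemma schubertRank_Icc (hI : I ⊆ Icc 1 n) : schubertRank n I (Icc 1 n) = #I := by
  refine le_antisymm (schubertRank_le fun B hB hBI => ?_) ?_
  · rw [inter_eq_right.2 hB, hBI.1]
  · simpa only [inter_eq_right.2 hI] using
      card_inter_le_schubertRank (J := Icc 1 n) hI (galeLE_refl I)

lemma galeLE_of_schubertRank_eq_card (hI : I ⊆ Icc 1 n) (hBI : #B = #I)
    (hB : schubertRank n I B = #B) : galeLE B I := by
  obtain ⟨B', -, hB'I, hBB'⟩ := exists_card_inter_eq_schubertRank hI B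
  have hsub : B ⊆ B' := by
    rw [← inter_eq_left]
    exact eq_of_subset_of_card_le inter_subset_left (hBB' ▸ hB).ge
  rwa [eq_of_subset_of_card_le hsub (by rw [hBI, hB'I.1])]

end Rank

section Greedy

variable {α : Type*} {m : ℕ}

section Submodular

variable [DecidableEq α]

def IsSubmodular (z : Finset α → ℝ) : Prop := ∀ A B, z (A ∪ B) + z (A ∩ B) ≤ z A + z B

lemma IsSubmodular.sum {ι : Type*} [Fintype ι] {z : ι → Finset α → ℝ}
    (hz : ∀ j, IsSubmodular (z j)) : IsSubmodular fun A => ∑ j, z j A := fun A B => by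
  simpa only [← sum_add_distrib] using sum_le_sum fun j _ => hz j A B

end Submodular

variable [Fintype α]

def basePolytope (z : Finset α → ℝ) : Set (α → ℝ) :=
  {t | (∀ A, ∑ a ∈ A, t a ≤ z A) ∧ ∑ a, t a = z univ}

lemma convex_basePolytope (z : Finset α → ℝ) : Convex ℝ (basePolytope z) := by
  intro x hx y hy a b ha hb hab
  simp only [basePolytope, Set.mem_ofPred_eq, Pi.add_apply, Pi.smul_apply, smul_eq_mul,
    sum_add_distrib, ← mul_sum] at hx hy ⊢
  refine ⟨fun A => ?_, by rw [hx.2, hy.2, ← add_mul, hab, one_mul]⟩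
  have := mul_le_mul_of_nonneg_left (hx.1 A) ha
  have := mul_le_mul_of_nonneg_left (hy.1 A) hb
  linarith [show a * z A + b * z A = z A by rw [← add_mul, hab, one_mul]]

lemma sum_mem_basePolytope {ι : Type*} [Fintype ι] {z : ι → Finset α → ℝ} {p : ι → α → ℝ}
    (hp : ∀ j, p j ∈ basePolytope (z j)) : ∑ j, p j ∈ basePolytope fun A => ∑ j, z j A := by
  simp only [basePolytope, Set.mem_ofPred_eq, Finset.sum_apply]
  refine ⟨fun A => ?_, ?_⟩
  · rw [sum_comm]
    exact sum_le_sum fun j _ => (hp j).1 A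
  · rw [sum_comm]
    exact sum_congr rfl fun j _ => (hp j).2

def chainPrefix (e : Fin m ≃ α) (k : ℕ) : Finset α := {a | (e.symm a : ℕ) < k}

lemma mem_chainPrefix {e : Fin m ≃ α} {k : ℕ} {a : α} :
    a ∈ chainPrefix e k ↔ (e.symm a : ℕ) < k := by
  simp [chainPrefix]

lemma chainPrefix_of_le (e : Fin m ≃ α) {k : ℕ} (hk : m ≤ k) : chainPrefix e k = univ :=
  eq_univ_of_forall fun a => mem_chainPrefix.2 ((e.symm a).2.trans_le hk)

lemma exists_equiv_antitone (φ : α → ℝ) : ∃ e : Fin (Fintype.card α) ≃ α, Antitone (φ ∘ e) := by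
  let f := OrderDual.toDual ∘ φ ∘ (Fintype.equivFin α).symm
  exact ⟨(Tuple.sort f).trans (Fintype.equivFin α).symm, fun _ _ h => Tuple.monotone_sort f h⟩

lemma apply_notMem_chainPrefix (e : Fin m ≃ α) (p : Fin m) : e p ∉ chainPrefix e p := by
  simp [mem_chainPrefix]

def greedyPoint (z : Finset α → ℝ) (e : Fin m ≃ α) (a : α) : ℝ :=
  z (chainPrefix e (e.symm a + 1)) - z (chainPrefix e (e.symm a))

lemma greedyPoint_sum {ι : Type*} [Fintype ι] (z : ι → Finset α → ℝ) (e : Fin m ≃ α) :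
    greedyPoint (fun A => ∑ j, z j A) e = ∑ j, greedyPoint (z j) e := by
  ext a
  simp only [greedyPoint, Finset.sum_apply, sum_sub_distrib]

variable [DecidableEq α]

lemma chainPrefix_succ (e : Fin m ≃ α) (p : Fin m) :
    chainPrefix e (p + 1) = insert (e p) (chainPrefix e p) := by
  ext a
  rw [mem_insert, mem_chainPrefix, mem_chainPrefix, Nat.lt_succ_iff_lt_or_eq, or_comm,
    Fin.val_inj, e.symm_apply_eq]

lemma chainPrefix_induction (e : Fin m ≃ α) {motive : Finset α → Prop} (empty : motive ∅)
    (insert : ∀ p : Fin m, motive (chainPrefix e p) → motive (insert (e p) (chainPrefix e p)))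
    (k : ℕ) : motive (chainPrefix e k) := by
  induction k with
  | zero => simpa [chainPrefix] using empty
  | succ k ih =>
    by_cases hk : k < m
    · have := insert ⟨k, hk⟩ ih
      rwa [← chainPrefix_succ] at this
    · rwa [chainPrefix_of_le e (by omega : m ≤ k + 1), ← chainPrefix_of_le e (not_lt.1 hk)]

lemma greedyPoint_apply (z : Finset α → ℝ) (e : Fin m ≃ α) (p : Fin m) :
    greedyPoint z e (e p) = z (insert (e p) (chainPrefix e p)) - z (chainPrefix e p) := by
  rw [greedyPoint, e.symm_apply_apply, chainPrefix_succ]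

variable {z : Finset α → ℝ}

lemma sum_greedyPoint_chainPrefix (hz0 : z ∅ = 0) (e : Fin m ≃ α) (k : ℕ) :
    ∑ a ∈ chainPrefix e k, greedyPoint z e a = z (chainPrefix e k) := by
  refine chainPrefix_induction e (motive := fun S => ∑ a ∈ S, greedyPoint z e a = z S)
    (by rw [sum_empty, hz0]) (fun p ih => ?_) k
  rw [sum_insert (apply_notMem_chainPrefix e p), ih, greedyPoint_apply]
  ring

lemma sum_greedyPoint (hz0 : z ∅ = 0) (e : Fin m ≃ α) : ∑ a, greedyPoint z e a = z univ := by
  simpa only [chainPrefix_of_le e le_rfl] using sum_greedyPoint_chainPrefix hz0 e m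

lemma sum_greedyPoint_le (hz0 : z ∅ = 0) (hsub : IsSubmodular z)
    (e : Fin m ≃ α) (A : Finset α) : ∑ a ∈ A, greedyPoint z e a ≤ z A := by
  induction A using Finset.induction_on_max_value e.symm with
  | empty => rw [sum_empty, hz0]
  | insert a A ha hmax ih =>
    obtain ⟨p, rfl⟩ := e.surjective a
    have hA : A ⊆ chainPrefix e p := fun x hx => mem_chainPrefix.2 <| by
      have := hmax x hx
      rw [e.symm_apply_apply] at this
      exact lt_of_le_of_ne this fun h => ha (by rwa [← Fin.val_inj.1 h, e.apply_symm_apply])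
    have := hsub (insert (e p) A) (chainPrefix e p)
    rw [insert_union, union_eq_right.2 hA, insert_inter_of_notMem (apply_notMem_chainPrefix e p),
      inter_eq_left.2 hA] at this
    rw [sum_insert ha, greedyPoint_apply]
    linarith

lemma greedyPoint_mem_basePolytope (hz0 : z ∅ = 0)
    (hsub : IsSubmodular z) (e : Fin m ≃ α) :
    greedyPoint z e ∈ basePolytope z :=
  ⟨sum_greedyPoint_le hz0 hsub e, sum_greedyPoint hz0 e⟩

lemma sum_mul_nonpos_of_antitone {e : Fin m ≃ α} {φ u : α → ℝ} (hφ : Antitone (φ ∘ e))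
    (hu : ∀ k, ∑ a ∈ chainPrefix e k, u a ≤ 0) (hu_univ : ∑ a, u a = 0) :
    ∑ a, φ a * u a ≤ 0 := by
  -- Abel summation, by induction along the chain: `c` is any lower bound of `φ` on the prefix.
  have key (k : ℕ) : ∀ c, (∀ a ∈ chainPrefix e k, c ≤ φ a) →
      ∑ a ∈ chainPrefix e k, φ a * u a ≤ c * ∑ a ∈ chainPrefix e k, u a := by
    refine chainPrefix_induction e (motive := fun S => ∀ c, (∀ a ∈ S, c ≤ φ a) →
      ∑ a ∈ S, φ a * u a ≤ c * ∑ a ∈ S, u a) (by simp) (fun p ih c hc => ?_) k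
    have hnot := apply_notMem_chainPrefix e p
    have hle : ∀ a ∈ chainPrefix e p, φ (e p) ≤ φ a := fun a ha => by
      simpa using hφ (le_of_lt (mem_chainPrefix.1 ha) : e.symm a ≤ p)
    have hneg := hu (p + 1)
    rw [chainPrefix_succ, sum_insert hnot] at hneg
    rw [sum_insert hnot, sum_insert hnot]
    calc φ (e p) * u (e p) + ∑ a ∈ chainPrefix e p, φ a * u a
        ≤ φ (e p) * (u (e p) + ∑ a ∈ chainPrefix e p, u a) := by
          have := ih (φ (e p)) hle
          linarith
      _ ≤ c * (u (e p) + ∑ a ∈ chainPrefix e p, u a) :=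
          mul_le_mul_of_nonpos_right (hc _ (mem_insert_self _ _)) hneg
  obtain ⟨c, hc⟩ := (Set.finite_range φ).bddBelow
  have := key m c fun a _ => hc (Set.mem_range_self a)
  rwa [chainPrefix_of_le e le_rfl, hu_univ, mul_zero] at this

lemma sum_mul_le_sum_mul_greedyPoint (hz0 : z ∅ = 0) {e : Fin m ≃ α} {φ t : α → ℝ}
    (hφ : Antitone (φ ∘ e)) (ht : t ∈ basePolytope z) :
    ∑ a, φ a * t a ≤ ∑ a, φ a * greedyPoint z e a := by
  have hu (k : ℕ) : ∑ a ∈ chainPrefix e k, (t a - greedyPoint z e a) ≤ 0 := by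
    rw [sum_sub_distrib, sum_greedyPoint_chainPrefix hz0, sub_nonpos]
    exact ht.1 _
  have hu_univ : ∑ a, (t a - greedyPoint z e a) = 0 := by
    rw [sum_sub_distrib, ht.2, sum_greedyPoint hz0, sub_self]
  have := sum_mul_nonpos_of_antitone hφ hu hu_univ
  simp only [mul_sub, sum_sub_distrib, sub_nonpos] at this
  exact this

lemma exists_chainPrefix_card_eq (A : Finset α) :
    ∃ e : Fin (Fintype.card α) ≃ α, chainPrefix e #A = A := by
  -- a chain along which the indicator of `A` decreases lists `A` first
  obtain ⟨e, he⟩ := exists_equiv_antitone fun a => if a ∈ A then (1 : ℝ) else 0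
  refine ⟨e, ext fun a => ?_⟩
  have key := Tuple.lt_card_ge_iff_apply_ge_of_antitone he (j := e.symm a) (a := 1)
  simp only [Function.comp_apply, e.apply_symm_apply] at key
  have hcard : #{p | (1 : ℝ) ≤ if e p ∈ A then 1 else 0} = #A := by
    rw [← card_map e.toEmbedding]
    congr 1
    ext b
    simp only [mem_map_equiv, mem_filter, mem_univ, true_and, Equiv.apply_symm_apply]
    split_ifs with h <;> simp [h]
  rw [mem_chainPrefix, ← hcard, key]
  split_ifs with h <;> simp [h]

lemma le_of_basePolytope_subset (hz0 : z ∅ = 0) (hsub : IsSubmodular z) {z' : Finset α → ℝ}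
    (h : basePolytope z ⊆ basePolytope z') (A : Finset α) : z A ≤ z' A := by
  obtain ⟨e, he⟩ := exists_chainPrefix_card_eq A
  have hA := sum_greedyPoint_chainPrefix hz0 e #A
  rw [he] at hA
  exact hA ▸ (h (greedyPoint_mem_basePolytope hz0 hsub e)).1 A

lemma eq_of_basePolytope_eq {z' : Finset α → ℝ} (hz0 : z ∅ = 0) (hsub : IsSubmodular z)
    (hz0' : z' ∅ = 0) (hsub' : IsSubmodular z') (h : basePolytope z = basePolytope z') :
    z = z' :=
  funext fun A => (le_of_basePolytope_subset hz0 hsub h.le A).antisymm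
    (le_of_basePolytope_subset hz0' hsub' h.ge A)

end Greedy

section SchubertPolytope

variable {n : ℕ}

def oneBased (A : Finset (Fin n)) : Finset ℕ := A.image fun i : Fin n => (i : ℕ) + 1

lemma succ_val_injective : Function.Injective fun i : Fin n => (i : ℕ) + 1 :=
  (add_left_injective 1).comp Fin.val_injective

lemma mem_oneBased {A : Finset (Fin n)} {i : Fin n} : (i : ℕ) + 1 ∈ oneBased A ↔ i ∈ A :=
  succ_val_injective.mem_finset_image

lemma oneBased_subset_Icc (A : Finset (Fin n)) : oneBased A ⊆ Icc 1 n := by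
  intro x hx
  obtain ⟨i, -, rfl⟩ := mem_image.1 hx
  exact mem_Icc.2 ⟨by omega, i.2⟩

lemma oneBased_univ : oneBased (univ : Finset (Fin n)) = Icc 1 n := by
  refine (oneBased_subset_Icc _).antisymm fun x hx => ?_
  obtain ⟨h1, hn⟩ := mem_Icc.1 hx
  exact mem_image.2 ⟨⟨x - 1, by omega⟩, mem_univ _, by simp only; omega⟩

noncomputable def schubertRankFin (n : ℕ) (I : Finset ℕ) (A : Finset (Fin n)) : ℝ :=
  schubertRank n I (oneBased A)

variable {I : Finset ℕ}

lemma schubertRankFin_empty : schubertRankFin n I ∅ = 0 := by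
  rw [schubertRankFin, Nat.cast_eq_zero, ← Nat.le_zero]
  exact (schubertRank_le_card _).trans_eq (by simp [oneBased])

lemma isSubmodular_schubertRankFin (hI : I ⊆ Icc 1 n) : IsSubmodular (schubertRankFin n I) :=
  fun A B => by
    simp only [schubertRankFin, oneBased, image_union,
      image_inter _ _ succ_val_injective]
    exact_mod_cast schubertRank_union_add_inter_le hI (oneBased_subset_Icc A)
      (oneBased_subset_Icc B)

lemma schubertRankFin_insert (A : Finset (Fin n)) (i : Fin n) :
    schubertRankFin n I (insert i A) = schubertRankFin n I A ∨
      schubertRankFin n I (insert i A) = schubertRankFin n I A + 1 := by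
  have hmono := schubertRank_mono (n := n) (I := I) (subset_insert ((i : ℕ) + 1) (oneBased A))
  have hle := schubertRank_insert_le (n := n) (I := I) ((i : ℕ) + 1) (oneBased A)
  simp only [schubertRankFin, oneBased, image_insert] at hmono hle ⊢
  rcases (Nat.le_add_one_iff.1 hle) with h | h
  · exact Or.inl (by rw [le_antisymm h hmono])
  · exact Or.inr (by rw [h]; push_cast; ring)

def incidenceVector (n : ℕ) (B : Finset ℕ) : Fin n → ℝ := fun i => if (i : ℕ) + 1 ∈ B then 1 else 0

lemma sum_incidenceVector (A : Finset (Fin n)) (B : Finset ℕ) :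
    ∑ i ∈ A, incidenceVector n B i = #(oneBased A ∩ B) := by
  simp only [incidenceVector]
  rw [sum_boole, ← filter_mem_eq_inter, oneBased, filter_image,
    card_image_of_injective _ succ_val_injective]

lemma incidenceVector_mem_schubertPolytope {B : Finset ℕ} (hB : B ⊆ Icc 1 n)
    (hBI : galeLE B I) : incidenceVector n B ∈ schubertPolytope n I :=
  subset_convexHull ℝ _ ⟨B, hB, hBI, rfl⟩

lemma isCompact_schubertPolytope (I : Finset ℕ) : IsCompact (schubertPolytope n I) := by
  have hfin := (Icc 1 n).powerset.finite_toSet.image (incidenceVector n)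
  refine (hfin.subset ?_).isCompact_convexHull ℝ
  rintro _ ⟨B, hB, -, rfl⟩
  exact ⟨B, mem_powerset.2 hB, rfl⟩

lemma schubertPolytope_subset_basePolytope (hI : I ⊆ Icc 1 n) :
    schubertPolytope n I ⊆ basePolytope (schubertRankFin n I) := by
  refine convexHull_min ?_ (convex_basePolytope _)
  rintro _ ⟨B, hB, hBI, rfl⟩
  change incidenceVector n B ∈ _
  refine ⟨fun A => ?_, ?_⟩
  · rw [sum_incidenceVector, schubertRankFin]
    exact_mod_cast card_inter_le_schubertRank hB hBI
  · rw [sum_incidenceVector, schubertRankFin, oneBased_univ, inter_eq_right.2 hB,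
      schubertRank_Icc hI, hBI.1]

lemma greedyPoint_mem_schubertPolytope (hI : I ⊆ Icc 1 n) {m : ℕ} (e : Fin m ≃ Fin n) :
    greedyPoint (schubertRankFin n I) e ∈ schubertPolytope n I := by
  set g := greedyPoint (schubertRankFin n I) e
  have hg : ∀ i, g i = 0 ∨ g i = 1 := fun i => by
    obtain ⟨p, rfl⟩ := e.surjective i
    rcases schubertRankFin_insert (I := I) (chainPrefix e p) (e p) with h | h
    · exact Or.inl (by simp only [g]; rw [greedyPoint_apply, h, sub_self])
    · exact Or.inr (by simp only [g]; rw [greedyPoint_apply, h, add_sub_cancel_left])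
  set G : Finset (Fin n) := {i | g i = 1}
  have hgG : g = incidenceVector n (oneBased G) := funext fun i => by
    simp only [incidenceVector, mem_oneBased, G, mem_filter, mem_univ, true_and]
    rcases hg i with h | h <;> simp [h]
  have hbase : g ∈ basePolytope (schubertRankFin n I) :=
    greedyPoint_mem_basePolytope schubertRankFin_empty (isSubmodular_schubertRankFin hI) e
  rw [hgG] at hbase ⊢
  obtain ⟨hle, huniv⟩ := hbase
  specialize hle G
  rw [sum_incidenceVector, inter_self, schubertRankFin] at hle
  rw [sum_incidenceVector, schubertRankFin, oneBased_univ, schubertRank_Icc hI,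
    inter_eq_right.2 (oneBased_subset_Icc G)] at huniv
  refine incidenceVector_mem_schubertPolytope (oneBased_subset_Icc G)
    (galeLE_of_schubertRank_eq_card hI (by exact_mod_cast huniv) ?_)
  exact le_antisymm (schubertRank_le_card _) (by exact_mod_cast hle)

end SchubertPolytope

variable {n : ℕ}

theorem minkowskiSum_schubertPolytope_eq {ι : Type*} [Fintype ι] (I : ι → Finset ℕ)
    (hI : ∀ j, I j ⊆ Icc 1 n) :
    {x | ∃ p : ι → Fin n → ℝ, (∀ j, p j ∈ schubertPolytope n (I j)) ∧ x = ∑ j, p j} =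
      basePolytope fun A => ∑ j, schubertRankFin n (I j) A := by
  set S := {x | ∃ p : ι → Fin n → ℝ, (∀ j, p j ∈ schubertPolytope n (I j)) ∧ x = ∑ j, p j}
  let L : (ι → Fin n → ℝ) →ₗ[ℝ] Fin n → ℝ := ∑ j, LinearMap.proj j
  have hS : S = L '' Set.univ.pi fun j => schubertPolytope n (I j) := by
    ext x
    simp [S, L, eq_comm]
  refine Set.Subset.antisymm ?_ fun t ht => ?_
  · rintro _ ⟨p, hp, rfl⟩
    exact sum_mem_basePolytope fun j => schubertPolytope_subset_basePolytope (hI j) (hp j)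
  by_contra htS
  have hconv : Convex ℝ S := hS ▸ (convex_pi fun j _ => convex_convexHull ℝ _).linear_image L
  have hclosed : IsClosed S := hS ▸ ((isCompact_univ_pi fun j =>
    isCompact_schubertPolytope (I j)).image L.continuous_of_finiteDimensional).isClosed
  obtain ⟨f, u, hft, hfS⟩ := geometric_hahn_banach_point_closed hconv hclosed htS
  -- the greedy point of a chain along which `ψ` decreases lies in `S` and beats `t`
  let ψ : Fin n → ℝ := fun i => -f fun j => if i = j then 1 else 0
  have hψ (x : Fin n → ℝ) : ∑ i, ψ i * x i = -f x := by
    have := (f : (Fin n → ℝ) →ₗ[ℝ] ℝ).pi_apply_eq_sum_univ x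
    rw [ContinuousLinearMap.coe_coe] at this
    simp [this, ψ, mul_comm]
  obtain ⟨e, he⟩ := exists_equiv_antitone ψ
  have hq : greedyPoint (fun A => ∑ j, schubertRankFin n (I j) A) e ∈ S :=
    ⟨_, fun j => greedyPoint_mem_schubertPolytope (hI j) e, greedyPoint_sum _ e⟩
  have := sum_mul_le_sum_mul_greedyPoint (by simp [schubertRankFin_empty]) he ht
  rw [hψ, hψ] at this
  linarith [hfS _ hq]

lemma exists_fin_family_sum_eq {β : Type*} (T : Finset β) (c : β → ℕ) :
    ∃ (k : ℕ) (I : Fin k → β), (∀ j, I j ∈ T) ∧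
      ∀ f : β → ℝ, ∑ j, f (I j) = ∑ b ∈ T, (c b : ℝ) * f b := by
  let ι := Σ b : T, Fin (c b)
  refine ⟨Fintype.card ι, fun j => ((Fintype.equivFin ι).symm j).1, fun j => by simp, fun f => ?_⟩
  rw [(Fintype.equivFin ι).symm.sum_comp (fun x : ι => f x.1), Fintype.sum_sigma,
    ← sum_coe_sort T]
  simp

end SchubertMatroid

open SchubertMatroid in
theorem stmt_4_general (n : ℕ) (z : Finset (Fin n) → ℝ) (hz0 : z ∅ = 0)
    (hsub : ∀ A B : Finset (Fin n), z (A ∪ B) + z (A ∩ B) ≤ z A + z B)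
    (P : Set (Fin n → ℝ))
    (hP : P = {t | (∀ A : Finset (Fin n), ∑ i ∈ A, t i ≤ z A) ∧
      ∑ i, t i = z Finset.univ}) :
    IsSchubitope n P ↔
      ∃ c : Finset ℕ → ℕ, ∀ A : Finset (Fin n),
        z A = ∑ I ∈ (Finset.Icc 1 n).powerset.erase ∅,
          (c I : ℝ) * (schubertRank n I (Finset.image (fun i : Fin n => (i : ℕ) + 1) A) : ℝ) := by
  subst hP
  change IsSchubitope n (basePolytope z) ↔ ∃ c : Finset ℕ → ℕ, ∀ A, z A =
    ∑ I ∈ (Icc 1 n).powerset.erase ∅, (c I : ℝ) * schubertRankFin n I A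
  have hT {I : Finset ℕ} : I ∈ (Icc 1 n).powerset.erase ∅ ↔ I.Nonempty ∧ I ⊆ Icc 1 n := by
    rw [mem_erase, mem_powerset, nonempty_iff_ne_empty]
  constructor
  · rintro ⟨k, I, hI, hPI⟩
    rw [minkowskiSum_schubertPolytope_eq I fun j => (hI j).2] at hPI
    have hz := eq_of_basePolytope_eq hz0 hsub (by simp [schubertRankFin_empty])
      (IsSubmodular.sum fun j => isSubmodular_schubertRankFin (hI j).2) hPI
    refine ⟨fun J => #{j | I j = J}, fun A => ?_⟩
    rw [hz]
    dsimp only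
    rw [← sum_fiberwise_of_maps_to' (s := univ) (fun j _ => hT.2 (hI j))
      fun J => schubertRankFin n J A]
    simp
  · rintro ⟨c, hc⟩
    obtain ⟨k, I, hIT, hsum⟩ := exists_fin_family_sum_eq ((Icc 1 n).powerset.erase ∅) c
    refine ⟨k, I, fun j => hT.1 (hIT j), ?_⟩
    rw [minkowskiSum_schubertPolytope_eq I fun j => (hT.1 (hIT j)).2]
    congr
    exact funext fun A => (hc A).trans (hsum _).symm

theorem stmt_4 (n : ℕ) (hn : 1 ≤ n) (z : Finset (Fin n) → ℝ) (hz0 : z ∅ = 0)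
    (hsub : ∀ A B : Finset (Fin n), z (A ∪ B) + z (A ∩ B) ≤ z A + z B)
    (P : Set (Fin n → ℝ))
    (hP : P = {t | (∀ A : Finset (Fin n), ∑ i ∈ A, t i ≤ z A) ∧
      ∑ i, t i = z Finset.univ}) :
    IsSchubitope n P ↔
      ∃ c : Finset ℕ → ℕ, ∀ A : Finset (Fin n),
        z A = ∑ I ∈ (Finset.Icc 1 n).powerset.erase ∅,
          (c I : ℝ) * (schubertRank n I (Finset.image (fun i : Fin n => (i : ℕ) + 1) A) : ℝ) :=
  stmt_4_general n z hz0 hsub P hP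
end

section
/- Let S ⊆ [n] be nonempty, s ∈ S, d = s − #{i ∈ S : i ≤ s}, and fix 0 ≤ k < d and J ⊆ [n]. Then r_{SM_n(S^{(k+1,s)})}(J) − r_{SM_n(S^{(k,s)})}(J) ∈ {0, 1}. Moreover, if r_{SM_n(S^{(k+1,s)})}(J) = r_{SM_n(S^{(k,s)})}(J), then: r_{SM_n(S^{(k'+1,s)})}(J) = r_{SM_n(S^{(k',s)})}(J) for every k' with k ≤ k' < d, and r_{SM_n(S^{(k+1,s)})}(J') = r_{SM_n(S^{(k,s)})}(J') for every J' ⊆ J. -/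
open MvPolynomial

/-!
The rank of `J` in `SM_n(I)` is `min_t (#{x ∈ J | x ≤ t} + #{x ∈ I | t < x})`: a basis `B` below
`I` in Gale order has at most as many elements above `t` as `I`, and a basis attaining the bound is
built greedily along `I` in increasing order. Inserting `i` into `I` raises this bound by one for
`t < i` and leaves it unchanged for `t ≥ i`; hence the rank grows by at most one, and stays the same
exactly when the bound is minimized at some `t ≥ i`. The elements inserted by the padding decrease,
so such a minimizer persists along the padding; and passing to `J' ⊆ J` subtracts from the bound a
quantity monotone in `t`, so it persists there too.
-/

open Finset

def countGt (R : Finset ℕ) (t : ℕ) : ℕ := #{x ∈ R | t < x}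

lemma getD_sort_eq_orderEmbOfFin (R : Finset ℕ) {m : ℕ} (hm : m < #R) :
    (R.sort (· ≤ ·)).getD m 0 = R.orderEmbOfFin rfl ⟨m, hm⟩ := by
  rw [orderEmbOfFin_apply, List.getD_eq_getElem _ _ (by simpa using hm)]
  rfl

lemma lt_getD_sort_iff (R : Finset ℕ) (t : ℕ) {m : ℕ} (hm : m < #R) :
    t < (R.sort (· ≤ ·)).getD m 0 ↔ #R - m ≤ countGt R t := by
  set f := R.orderEmbOfFin rfl
  have hcount : countGt R t = #{i | t < f i} := by
    conv_lhs => rw [countGt, ← map_orderEmbOfFin_univ R rfl]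
    rw [filter_map, card_map]
    rfl
  rw [getD_sort_eq_orderEmbOfFin R hm, hcount]
  constructor
  · intro h
    calc #R - m = #(Ici (⟨m, hm⟩ : Fin #R)) := by simp
      _ ≤ _ := card_le_card fun i hi => by
        simp only [mem_Ici, mem_filter, mem_univ, true_and] at hi ⊢
        exact h.trans_le (f.monotone hi)
  · intro h
    by_contra! hle
    have : #{i | t < f i} ≤ #(Ioi (⟨m, hm⟩ : Fin #R)) := card_le_card fun i hi => by
      simp only [mem_Ioi, mem_filter, mem_univ, true_and] at hi ⊢
      by_contra! him
      exact (hle.trans_lt hi).not_ge (f.monotone him)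
    simp at this
    omega

lemma galeLE_iff (R S : Finset ℕ) :
    galeLE R S ↔ #R = #S ∧ ∀ t, countGt R t ≤ countGt S t := by
  refine ⟨fun ⟨hc, hle⟩ => ⟨hc, fun t => ?_⟩, fun ⟨hc, hle⟩ => ⟨hc, fun m hm => ?_⟩⟩
  · obtain h0 | hpos := Nat.eq_zero_or_pos (countGt R t)
    · omega
    have hcR : countGt R t ≤ #R := card_filter_le _ _
    have hm : #R - countGt R t < #R := by omega
    have hR := (lt_getD_sort_iff R t hm).2 (by omega)
    have hS := (lt_getD_sort_iff S t (hc ▸ hm)).1 (hR.trans_le (hle _ hm))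
    omega
  · by_contra! hlt
    have hR := (lt_getD_sort_iff R _ hm).1 hlt
    exact lt_irrefl _ ((lt_getD_sort_iff S _ (hc ▸ hm)).2 (hc ▸ hR.trans (hle _)))

lemma countGt_insert {x : ℕ} {R : Finset ℕ} (hx : x ∉ R) (t : ℕ) :
    countGt (insert x R) t = countGt R t + if t < x then 1 else 0 := by
  rw [countGt, countGt, filter_insert]
  split_ifs
  · exact card_insert_of_notMem fun h => hx (mem_filter.1 h).1
  · rfl

lemma countGt_eq_zero {R : Finset ℕ} {t : ℕ} (h : ∀ y ∈ R, y ≤ t) : countGt R t = 0 :=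
  card_eq_zero.2 <| filter_eq_empty_iff.2 fun y hy => not_lt.2 (h y hy)

lemma countGt_mono {R R' : Finset ℕ} (h : R ⊆ R') (t : ℕ) : countGt R t ≤ countGt R' t :=
  card_le_card (filter_subset_filter _ h)

lemma galeLE_insert_insert_s9 {B I : Finset ℕ} {x m : ℕ} (h : galeLE B I) (hxB : x ∉ B)
    (hmI : m ∉ I) (hxm : x ≤ m) : galeLE (insert x B) (insert m I) := by
  rw [galeLE_iff] at h ⊢
  refine ⟨by rw [card_insert_of_notMem hxB, card_insert_of_notMem hmI, h.1], fun t => ?_⟩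
  rw [countGt_insert hxB, countGt_insert hmI]
  have := h.2 t
  split_ifs <;> omega

def rankBound (I J : Finset ℕ) (t : ℕ) : ℕ := #{x ∈ J | x ≤ t} + countGt I t

lemma rankBound_insert (J : Finset ℕ) {i : ℕ} {I : Finset ℕ} (hi : i ∉ I) (t : ℕ) :
    rankBound (insert i I) J t = rankBound I J t + if t < i then 1 else 0 := by
  rw [rankBound, rankBound, countGt_insert hi, add_assoc]

lemma rankBound_mono {I I' : Finset ℕ} (h : I ⊆ I') (J : Finset ℕ) (t : ℕ) :
    rankBound I J t ≤ rankBound I' J t :=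
  Nat.add_le_add_left (countGt_mono h t) _

lemma schubertRank_le_rankBound (n : ℕ) (I J : Finset ℕ) (t : ℕ) :
    schubertRank n I J ≤ rankBound I J t := by
  classical
  refine Finset.sup_le fun B hB => ?_
  have hBI := ((galeLE_iff B I).1 (mem_filter.1 hB).2).2 t
  calc #(J ∩ B) = #{x ∈ J ∩ B | x ≤ t} + #{x ∈ J ∩ B | ¬x ≤ t} :=
        (card_filter_add_card_filter_not _).symm
    _ ≤ #{x ∈ J | x ≤ t} + #{x ∈ B | t < x} := by
        gcongr
        · exact inter_subset_left
        · exact fun x hx => by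
            simp only [mem_filter, mem_inter] at hx ⊢
            exact ⟨hx.1.2, not_le.1 hx.2⟩
    _ ≤ rankBound I J t := by rw [rankBound]; exact Nat.add_le_add_left hBI _

lemma exists_galeLE_rankBound_le_card_inter {n : ℕ} {I J : Finset ℕ} (hI : I ⊆ Icc 1 n)
    (hJ : J ⊆ Icc 1 n) :
    ∃ B ⊆ Icc 1 n, galeLE B I ∧ ∃ t, rankBound I J t ≤ #(J ∩ B) := by
  induction I using Finset.induction_on_max with
  | empty =>
    refine ⟨∅, empty_subset _, ⟨rfl, by simp⟩, 0, ?_⟩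
    simpa [rankBound, countGt] using fun h => by simpa using (mem_Icc.1 (hJ h)).1
  | insert m I hlt ih =>
    have hmI : m ∉ I := fun h => lt_irrefl m (hlt m h)
    have hmn := mem_Icc.1 (hI (mem_insert_self m I))
    obtain ⟨B, hBn, hBI, t, ht⟩ := ih ((subset_insert m I).trans hI)
    suffices ∃ x ∈ Icc 1 m, x ∉ B ∧ ∃ t, rankBound (insert m I) J t ≤ #(J ∩ insert x B) by
      obtain ⟨x, hx, hxB, t, ht⟩ := this
      have hx := mem_Icc.1 hx
      exact ⟨insert x B, insert_subset (mem_Icc.2 ⟨hx.1, hx.2.trans hmn.2⟩) hBn,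
        galeLE_insert_insert_s9 hBI hxB hmI hx.2, t, ht⟩
    by_cases hJB : ∃ x ∈ J, x ≤ m ∧ x ∉ B
    · -- a new element of `J` enters the basis, paying for the new element `m` of `I`
      obtain ⟨x, hxJ, hxm, hxB⟩ := hJB
      refine ⟨x, mem_Icc.2 ⟨(mem_Icc.1 (hJ hxJ)).1, hxm⟩, hxB, t, ?_⟩
      rw [rankBound_insert J hmI, inter_insert_of_mem hxJ,
        card_insert_of_notMem fun h => hxB (mem_inter.1 h).2]
      split_ifs <;> omega
    · -- `J ∩ [1, m]` already lies in `B`; the bound at `t = m` is `#(J ∩ [1, m])`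
      push Not at hJB
      have hIm : #I < #(Icc 1 m) := by
        have := card_le_card fun y (hy : y ∈ I) =>
          mem_Ico.2 ⟨(mem_Icc.1 (hI (mem_insert_of_mem hy))).1, hlt y hy⟩
        simp only [Nat.card_Ico, Nat.card_Icc] at this ⊢
        omega
      obtain ⟨x, hx, hxB⟩ := exists_mem_notMem_of_card_lt_card (hBI.1 ▸ hIm)
      refine ⟨x, hx, hxB, m, ?_⟩
      have hcount : countGt (insert m I) m = 0 := countGt_eq_zero fun y hy =>
        (mem_insert.1 hy).elim le_of_eq fun hy => (hlt y hy).le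
      rw [rankBound, hcount, add_zero]
      exact card_le_card fun y hy => by
        rw [mem_filter] at hy
        exact mem_inter.2 ⟨hy.1, mem_insert_of_mem (hJB y hy.1 hy.2)⟩

lemma exists_rankBound_le_schubertRank {n : ℕ} {I J : Finset ℕ} (hI : I ⊆ Icc 1 n)
    (hJ : J ⊆ Icc 1 n) : ∃ t, rankBound I J t ≤ schubertRank n I J := by
  classical
  obtain ⟨B, hBn, hBI, t, ht⟩ := exists_galeLE_rankBound_le_card_inter hI hJ
  exact ⟨t, ht.trans <| le_sup (f := fun B => #(J ∩ B)) <| mem_filter.2 ⟨mem_powerset.2 hBn, hBI⟩⟩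

section Insert

variable {n : ℕ} {I J : Finset ℕ}

lemma schubertRank_le_of_subset {I' : Finset ℕ} (h : I ⊆ I') (hI' : I' ⊆ Icc 1 n)
    (hJ : J ⊆ Icc 1 n) : schubertRank n I J ≤ schubertRank n I' J := by
  obtain ⟨t, ht⟩ := exists_rankBound_le_schubertRank hI' hJ
  exact (schubertRank_le_rankBound n I J t).trans ((rankBound_mono h J t).trans ht)

lemma schubertRank_insert_le (hI : I ⊆ Icc 1 n) (hJ : J ⊆ Icc 1 n) (i : ℕ) :
    schubertRank n (insert i I) J ≤ schubertRank n I J + 1 := by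
  obtain ⟨t, ht⟩ := exists_rankBound_le_schubertRank hI hJ
  have hcount : countGt (insert i I) t ≤ countGt I t + 1 := by
    rw [countGt, countGt, filter_insert]
    split_ifs
    exacts [card_insert_le _ _, Nat.le_succ _]
  calc schubertRank n (insert i I) J ≤ rankBound (insert i I) J t :=
        schubertRank_le_rankBound n _ J t
    _ ≤ rankBound I J t + 1 := by rw [rankBound, rankBound]; omega
    _ ≤ schubertRank n I J + 1 := by omega

lemma schubertRank_insert_eq_iff {i : ℕ} (hi : i ∉ I) (hI : insert i I ⊆ Icc 1 n)
    (hJ : J ⊆ Icc 1 n) :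
    schubertRank n (insert i I) J = schubertRank n I J ↔
      ∃ t, i ≤ t ∧ rankBound I J t ≤ schubertRank n I J := by
  have hle := schubertRank_le_of_subset (subset_insert i I) hI hJ
  constructor
  · intro heq
    obtain ⟨t, ht⟩ := exists_rankBound_le_schubertRank hI hJ
    have hbound := schubertRank_le_rankBound n I J t
    rw [rankBound_insert J hi] at ht
    refine ⟨t, ?_, ?_⟩ <;> split_ifs at ht with hti <;> omega
  · rintro ⟨t, hit, ht⟩
    have hbound := schubertRank_le_rankBound n (insert i I) J t
    rw [rankBound_insert J hi, if_neg (not_lt.2 hit)] at hbound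
    omega

lemma rankBound_insert_le_schubertRank {i t : ℕ} (hi : i ∉ I) (hI : insert i I ⊆ Icc 1 n)
    (hJ : J ⊆ Icc 1 n) (hit : i ≤ t) (ht : rankBound I J t ≤ schubertRank n I J) :
    rankBound (insert i I) J t ≤ schubertRank n (insert i I) J := by
  rw [rankBound_insert J hi, if_neg (not_lt.2 hit),
    (schubertRank_insert_eq_iff hi hI hJ).2 ⟨t, hit, ht⟩]
  exact ht

lemma exists_rankBound_le_of_subset {J' : Finset ℕ} {i : ℕ} (hI : I ⊆ Icc 1 n)
    (hJ : J ⊆ Icc 1 n) (hJ' : J' ⊆ J) (h : ∃ t, i ≤ t ∧ rankBound I J t ≤ schubertRank n I J) :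
    ∃ t, i ≤ t ∧ rankBound I J' t ≤ schubertRank n I J' := by
  obtain ⟨t, hit, ht⟩ := h
  obtain ⟨t', ht'⟩ := exists_rankBound_le_schubertRank hI (hJ'.trans hJ)
  rcases le_or_gt i t' with hit' | hti
  · exact ⟨t', hit', ht'⟩
  refine ⟨t, hit, ?_⟩
  have hsplit : ∀ u, rankBound I J u = rankBound I J' u + #{x ∈ J \ J' | x ≤ u} := fun u => by
    rw [rankBound, rankBound, add_right_comm, ← card_union_of_disjoint
      (disjoint_filter_filter disjoint_sdiff), ← filter_union, union_sdiff_of_subset hJ']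
  have hmono : #{x ∈ J \ J' | x ≤ t'} ≤ #{x ∈ J \ J' | x ≤ t} :=
    card_le_card fun x hx => by
      simp only [mem_filter] at hx ⊢
      exact ⟨hx.1, by omega⟩
  have := schubertRank_le_rankBound n I J t'
  have := hsplit t
  have := hsplit t'
  omega

end Insert

section Pad

variable (S : Finset ℕ) (s : ℕ)

def padMissing (k : ℕ) : Finset ℕ := {i ∈ Ico 1 s | i ∉ pad S s k}

/-- The element inserted into `S^{(k,s)}` to form `S^{(k+1,s)}` (junk value `0` once `[1, s)` is
exhausted). -/
def padElt (k : ℕ) : ℕ := (padMissing S s k).sup id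

variable {S s}

lemma pad_succ_of_nonempty {k : ℕ} (h : (padMissing S s k).Nonempty) :
    pad S s (k + 1) = insert (padElt S s k) (pad S s k) := by
  have h' : ({i ∈ Ico 1 s | i ∉ pad S s k}).Nonempty := h
  rw [pad, dif_pos h', max'_eq_sup', sup'_eq_sup]
  rfl

lemma padElt_mem_padMissing {k : ℕ} (h : (padMissing S s k).Nonempty) :
    padElt S s k ∈ padMissing S s k := by
  rw [padElt, ← sup'_eq_sup h, ← max'_eq_sup']
  exact max'_mem _ h

lemma pad_subset_pad_succ (k : ℕ) : pad S s k ⊆ pad S s (k + 1) := by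
  rw [pad]
  split_ifs
  exacts [subset_insert _ _, Subset.rfl]

lemma pad_subset_union_Ico (k : ℕ) : pad S s k ⊆ S ∪ Ico 1 s := by
  induction k with
  | zero => exact subset_union_left
  | succ k ih =>
    rw [pad]
    split_ifs with h
    · exact insert_subset (mem_union_right _ (mem_filter.1 (max'_mem _ h)).1) ih
    · exact ih

lemma padElt_succ_le (k : ℕ) : padElt S s (k + 1) ≤ padElt S s k :=
  sup_mono fun i hi => by
    simp only [padMissing, mem_filter] at hi ⊢
    exact ⟨hi.1, fun h => hi.2 (pad_subset_pad_succ k h)⟩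

lemma padMissing_succ {k : ℕ} (h : (padMissing S s k).Nonempty) :
    padMissing S s (k + 1) = (padMissing S s k).erase (padElt S s k) := by
  ext i
  simp only [padMissing, pad_succ_of_nonempty h, mem_filter, mem_erase, mem_insert]
  tauto

lemma card_padMissing_zero (h0 : 0 ∉ S) (hs : s ∈ S) : #(padMissing S s 0) = padDepth S s := by
  have hsplit : {i ∈ S | i ≤ s} = insert s {i ∈ Ico 1 s | i ∈ S} := by
    ext i
    simp only [mem_filter, mem_insert, mem_Ico]
    constructor
    · rintro ⟨hiS, his⟩
      rcases his.eq_or_lt with rfl | his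
      · exact Or.inl rfl
      · exact Or.inr ⟨⟨Nat.pos_of_ne_zero (ne_of_mem_of_not_mem hiS h0), his⟩, hiS⟩
    · rintro (rfl | ⟨⟨-, his⟩, hiS⟩)
      exacts [⟨hs, le_rfl⟩, ⟨hiS, his.le⟩]
  have hcompl := card_filter_add_card_filter_not (s := Ico 1 s) (p := (· ∈ S))
  rw [Nat.card_Ico] at hcompl
  rw [padDepth, hsplit, card_insert_of_notMem (by simp)]
  change #{i ∈ Ico 1 s | i ∉ S} = _
  omega

lemma card_padMissing (h0 : 0 ∉ S) (hs : s ∈ S) {k : ℕ} (hk : k ≤ padDepth S s) :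
    #(padMissing S s k) = padDepth S s - k := by
  induction k with
  | zero => exact card_padMissing_zero h0 hs
  | succ k ih =>
    have hcard := ih (by omega)
    have hne : (padMissing S s k).Nonempty := card_pos.1 (by omega)
    rw [padMissing_succ hne, card_erase_of_mem (padElt_mem_padMissing hne), hcard]
    omega

lemma padMissing_nonempty (h0 : 0 ∉ S) (hs : s ∈ S) {k : ℕ} (hk : k < padDepth S s) :
    (padMissing S s k).Nonempty :=
  card_pos.1 (by rw [card_padMissing h0 hs hk.le]; omega)

end Pad

section PadRank

variable {n : ℕ} {S : Finset ℕ} {s : ℕ} {J : Finset ℕ}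

lemma zero_notMem_of_subset_Icc (hS : S ⊆ Icc 1 n) : 0 ∉ S := fun h => by
  simpa using hS h

lemma pad_subset_Icc (hS : S ⊆ Icc 1 n) (hs : s ∈ S) (k : ℕ) : pad S s k ⊆ Icc 1 n := by
  have hsn := (mem_Icc.1 (hS hs)).2
  refine (pad_subset_union_Ico k).trans (union_subset hS fun i hi => ?_)
  have := mem_Ico.1 hi
  exact mem_Icc.2 ⟨this.1, by omega⟩

lemma schubertRank_pad_succ_eq_iff (hS : S ⊆ Icc 1 n) (hs : s ∈ S) (hJ : J ⊆ Icc 1 n) {k : ℕ}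
    (hk : k < padDepth S s) :
    schubertRank n (pad S s (k + 1)) J = schubertRank n (pad S s k) J ↔
      ∃ t, padElt S s k ≤ t ∧ rankBound (pad S s k) J t ≤ schubertRank n (pad S s k) J := by
  have hne := padMissing_nonempty (zero_notMem_of_subset_Icc hS) hs hk
  have hsucc := pad_succ_of_nonempty hne
  rw [hsucc]
  exact schubertRank_insert_eq_iff (mem_filter.1 (padElt_mem_padMissing hne)).2
    (hsucc ▸ pad_subset_Icc hS hs (k + 1)) hJ

lemma exists_rankBound_le_pad_of_le (hS : S ⊆ Icc 1 n) (hs : s ∈ S) (hJ : J ⊆ Icc 1 n)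
    {k : ℕ} (h : ∃ t, padElt S s k ≤ t ∧ rankBound (pad S s k) J t ≤ schubertRank n (pad S s k) J)
    {k' : ℕ} (hkk' : k ≤ k') (hk' : k' < padDepth S s) :
    ∃ t, padElt S s k' ≤ t ∧ rankBound (pad S s k') J t ≤ schubertRank n (pad S s k') J := by
  induction k', hkk' using Nat.le_induction with
  | base => exact h
  | succ k' hkk' ih =>
    obtain ⟨t, hit, ht⟩ := ih (by omega)
    have hne := padMissing_nonempty (zero_notMem_of_subset_Icc hS) hs (by omega : k' < _)
    have hsucc := pad_succ_of_nonempty hne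
    refine ⟨t, (padElt_succ_le k').trans hit, ?_⟩
    rw [hsucc]
    exact rankBound_insert_le_schubertRank (mem_filter.1 (padElt_mem_padMissing hne)).2
      (hsucc ▸ pad_subset_Icc hS hs (k' + 1)) hJ hit ht

end PadRank

theorem stmt_9_general (n : ℕ) (S : Finset ℕ) (hS : S ⊆ Finset.Icc 1 n)
    (s : ℕ) (hs : s ∈ S) (k : ℕ) (hk : k < padDepth S s)
    (J : Finset ℕ) (hJ : J ⊆ Finset.Icc 1 n) :
    (schubertRank n (pad S s (k + 1)) J = schubertRank n (pad S s k) J ∨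
      schubertRank n (pad S s (k + 1)) J = schubertRank n (pad S s k) J + 1) ∧
    (schubertRank n (pad S s (k + 1)) J = schubertRank n (pad S s k) J →
      (∀ k', k ≤ k' → k' < padDepth S s →
        schubertRank n (pad S s (k' + 1)) J = schubertRank n (pad S s k') J) ∧
      ∀ J' ⊆ J,
        schubertRank n (pad S s (k + 1)) J' = schubertRank n (pad S s k) J') := by
  have hsucc := pad_succ_of_nonempty (padMissing_nonempty (zero_notMem_of_subset_Icc hS) hs hk)
  have hsub := pad_subset_Icc hS hs
  refine ⟨?_, fun heq => ?_⟩
  · have hge := schubertRank_le_of_subset (pad_subset_pad_succ k) (hsub (k + 1)) hJ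
    have hle := schubertRank_insert_le (hsub k) hJ (padElt S s k)
    rw [← hsucc] at hle
    omega
  have hmin := (schubertRank_pad_succ_eq_iff hS hs hJ hk).1 heq
  exact ⟨fun k' hkk' hk' => (schubertRank_pad_succ_eq_iff hS hs hJ hk').2 <|
      exists_rankBound_le_pad_of_le hS hs hJ hmin hkk' hk',
    fun J' hJ' => (schubertRank_pad_succ_eq_iff hS hs (hJ'.trans hJ) hk).2 <|
      exists_rankBound_le_of_subset (hsub k) hJ hJ' hmin⟩

theorem stmt_9 (n : ℕ) (S : Finset ℕ) (hS : S ⊆ Finset.Icc 1 n) (hS0 : S.Nonempty)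
    (s : ℕ) (hs : s ∈ S) (k : ℕ) (hk : k < padDepth S s)
    (J : Finset ℕ) (hJ : J ⊆ Finset.Icc 1 n) :
    (schubertRank n (pad S s (k + 1)) J = schubertRank n (pad S s k) J ∨
      schubertRank n (pad S s (k + 1)) J = schubertRank n (pad S s k) J + 1) ∧
    (schubertRank n (pad S s (k + 1)) J = schubertRank n (pad S s k) J →
      (∀ k', k ≤ k' → k' < padDepth S s →
        schubertRank n (pad S s (k' + 1)) J = schubertRank n (pad S s k') J) ∧
      ∀ J' ⊆ J,
        schubertRank n (pad S s (k + 1)) J' = schubertRank n (pad S s k) J') :=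
  stmt_9_general n S hS s hs k hk J hJ
end
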